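/- arXiv:1701.07990 — 8 statements merged into one kernel-verified Lean document; each statement's English description precedes it below -/
import Mathlib

section
/- Let L be an n×n CB matrix. Then every entry of the adjugate matrix adj(L) is non-negative. -/
/-!
A Z-matrix `A` (off-diagonal entries `≤ 0`) with positive row sums is monotone: `A x ≥ 0`
forces `x ≥ 0`, as one sees in the row of a minimal entry of `x`. Such matrices form a convex
set containing `1` on which `det` never vanishes, so `det A > 0`; the `j`-th column `x` of
`adj A` satisfies `A x = det A • eⱼ ≥ 0`, hence `adj A ≥ 0`. A CB matrix `L` has zero row sums,
so `L + t • 1` is such a matrix for `t > 0`, and `adj L ≥ 0` follows as `t → 0⁺`.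
-/

open Finset

/-- A critical binomial (CB) matrix. -/
def IsCB (n : ℕ) (L : Matrix (Fin n) (Fin n) ℤ) : Prop :=
  (∀ i, 0 < L i i) ∧ (∀ i j : Fin n, i ≠ j → L i j ≤ 0) ∧ (∀ i, ∑ j, L i j = 0) ∧
    (∀ j, ∃ i, i ≠ j ∧ L i j ≠ 0)

structure Matrix.IsRowDominantZMatrix {ι R : Type*} [Fintype ι] [AddCommMonoid R]
    [Preorder R] (A : Matrix ι ι R) : Prop where
  offDiag_nonpos : ∀ i j, i ≠ j → A i j ≤ 0
  rowSum_pos : ∀ i, 0 < ∑ j, A i j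

namespace Matrix.IsRowDominantZMatrix

variable {ι R : Type*} [Fintype ι]

section OrderedField

variable [Field R] [LinearOrder R] [IsStrictOrderedRing R] {A : Matrix ι ι R}

theorem nonneg_of_mulVec_nonneg (hA : A.IsRowDominantZMatrix) {x : ι → R}
    (hx : 0 ≤ A *ᵥ x) : 0 ≤ x := by
  intro j
  obtain ⟨i, -, hmin⟩ := Finset.exists_min_image univ x ⟨j, mem_univ j⟩
  suffices 0 ≤ x i from this.trans (hmin j (mem_univ j))
  by_contra! hneg
  have hle : (A *ᵥ x) i ≤ (∑ k, A i k) * x i := by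
    rw [mulVec, dotProduct, sum_mul]
    refine sum_le_sum fun k _ => ?_
    rcases eq_or_ne k i with rfl | hk
    · exact le_rfl
    · exact mul_le_mul_of_nonpos_left (hmin k (mem_univ k)) (hA.offDiag_nonpos i k hk.symm)
  exact (hx i).not_gt (hle.trans_lt (mul_neg_of_pos_of_neg (hA.rowSum_pos i) hneg))

theorem convex : Convex R {A : Matrix ι ι R | A.IsRowDominantZMatrix} := by
  intro A hA B hB a b ha hb hab
  refine ⟨fun i j hij => ?_, fun i => ?_⟩
  · simpa using add_nonpos (mul_nonpos_of_nonneg_of_nonpos ha (hA.offDiag_nonpos i j hij))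
      (mul_nonpos_of_nonneg_of_nonpos hb (hB.offDiag_nonpos i j hij))
  · have hAi := hA.rowSum_pos i
    have hBi := hB.rowSum_pos i
    simp only [add_apply, smul_apply, smul_eq_mul, sum_add_distrib, ← mul_sum]
    rcases ha.eq_or_lt with rfl | ha'
    · simp_all
    · positivity

variable [DecidableEq ι]

theorem det_ne_zero (hA : A.IsRowDominantZMatrix) : A.det ≠ 0 := by
  intro h
  obtain ⟨v, hv, hAv⟩ := exists_mulVec_eq_zero_iff.mpr h
  have hpos : 0 ≤ v := hA.nonneg_of_mulVec_nonneg hAv.ge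
  have hneg : 0 ≤ -v := hA.nonneg_of_mulVec_nonneg (by rw [mulVec_neg, hAv, neg_zero])
  exact hv (le_antisymm (neg_nonneg.mp hneg) hpos)

theorem one : (1 : Matrix ι ι R).IsRowDominantZMatrix where
  offDiag_nonpos i j hij := (one_apply_ne hij).le
  rowSum_pos i := by simp [one_apply]

theorem add_smul_one {M : Matrix ι ι R} (hoff : ∀ i j, i ≠ j → M i j ≤ 0)
    (hsum : ∀ i, 0 ≤ ∑ j, M i j) {t : R} (ht : 0 < t) : (M + t • 1).IsRowDominantZMatrix where
  offDiag_nonpos i j hij := by simpa [one_apply_ne hij] using hoff i j hij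
  rowSum_pos i := by
    simp only [add_apply, smul_apply, smul_eq_mul, sum_add_distrib, ← mul_sum, one_apply,
      sum_ite_eq, mem_univ, if_true, mul_one]
    linarith [hsum i]

end OrderedField

variable [DecidableEq ι] {A : Matrix ι ι ℝ}

theorem det_pos (hA : A.IsRowDominantZMatrix) : 0 < A.det := by
  by_contra! hdet
  obtain ⟨B, hB, hB0⟩ := convex.isPreconnected.intermediate_value hA one
    (continuous_id.matrix_det.continuousOn) ⟨hdet, by simp⟩
  exact det_ne_zero hB hB0

theorem adjugate_nonneg (hA : A.IsRowDominantZMatrix) (i j : ι) : 0 ≤ A.adjugate i j := by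
  refine hA.nonneg_of_mulVec_nonneg (x := fun k => A.adjugate k j) (fun k => ?_) i
  have : (A *ᵥ fun k => A.adjugate k j) k = (A * A.adjugate) k j := rfl
  rw [Pi.zero_apply, this, mul_adjugate, smul_apply, smul_eq_mul]
  exact mul_nonneg hA.det_pos.le (by rw [one_apply]; split_ifs <;> norm_num)

end Matrix.IsRowDominantZMatrix

theorem Matrix.adjugate_nonneg_of_offDiag_nonpos_of_rowSum_nonneg {ι : Type*} [Fintype ι]
    [DecidableEq ι] {M : Matrix ι ι ℝ} (hoff : ∀ i j, i ≠ j → M i j ≤ 0) (hsum : ∀ i, 0 ≤ ∑ j, M i j)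
    (i j : ι) : 0 ≤ M.adjugate i j := by
  have hcont : Continuous fun t : ℝ => (M + t • 1).adjugate i j :=
    (continuous_apply j).comp <| (continuous_apply i).comp <|
      (continuous_const.add (continuous_id.smul continuous_const)).matrix_adjugate
  have hlim := (hcont.tendsto 0).mono_left (nhdsWithin_le_nhds (s := Set.Ioi 0))
  simpa using ge_of_tendsto hlim <| eventually_nhdsWithin_of_forall fun t ht =>
    (IsRowDominantZMatrix.add_smul_one hoff hsum ht).adjugate_nonneg i j

theorem adjugate_nonneg_of_isCB_general (n : ℕ)
    (L : Matrix (Fin n) (Fin n) ℤ) (hL : IsCB n L) :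
    ∀ i j : Fin n, 0 ≤ L.adjugate i j := by
  obtain ⟨-, hoff, hsum, -⟩ := hL
  intro i j
  have hM := Matrix.adjugate_nonneg_of_offDiag_nonpos_of_rowSum_nonneg
    (M := (Int.castRingHom ℝ).mapMatrix L) (fun i j hij => by simpa using hoff i j hij)
    (fun i => by simpa using (congrArg (Int.cast : ℤ → ℝ) (hsum i)).ge) i j
  rw [← RingHom.map_adjugate] at hM
  simpa using hM

/-- If `L` is an `n × n` CB matrix, then every entry of its adjugate
matrix is non-negative. -/
theorem adjugate_nonneg_of_isCB (n : ℕ) (hn : 3 ≤ n)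
    (L : Matrix (Fin n) (Fin n) ℤ) (hL : IsCB n L) :
    ∀ i j : Fin n, 0 ≤ L.adjugate i j :=
  adjugate_nonneg_of_isCB_general n L hL
end

section
/- Let L be an n×n ICB matrix. Then the rank of L over ℚ equals n−1, and every entry of the adjugate matrix adj(L) is strictly positive. -/
open Finset

/-- Irreducibility of a square matrix. -/
def IsIrreducibleMat {n : ℕ} (M : Matrix (Fin n) (Fin n) ℤ) : Prop :=
  ¬ ∃ I J : Set (Fin n), I.Nonempty ∧ J.Nonempty ∧ Disjoint I J ∧ I ∪ J = Set.univ ∧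
      ∀ i ∈ I, ∀ j ∈ J, M i j = 0

def IsICB (n : ℕ) (L : Matrix (Fin n) (Fin n) ℤ) : Prop := IsCB n L ∧ IsIrreducibleMat L

/-!
The row sums of `L` vanish, so `L 1 = 0`, `det L = 0`, and `adj(L)_jj = det (L + E_jj)`.
Because the off-diagonal entries of `L` are `≤ 0` and its support is strongly connected, a
maximum principle for `|x|` shows that `L + D` is nonsingular for every nonnegative diagonal
`D ≠ 0`. Taking `D = E_jj + t • 1` for all `t ≥ 0`, the monic polynomial
`t ↦ det (L + E_jj + t • 1)` has no root in `[0, ∞)`, so `det (L + E_jj) > 0`. Nonsingularity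
of `L + E_jj` also gives `ker L = span 1`, hence rank `n - 1`; and as `L * adj L = 0`, each
column of `adj L` is constant, equal to its positive diagonal entry.
-/

theorem Polynomial.Monic.eval_pos_of_forall_le_eval_ne_zero {P : Polynomial ℝ} (hP : P.Monic)
    {a : ℝ} (h : ∀ x, a ≤ x → P.eval x ≠ 0) : 0 < P.eval a := by
  rcases P.natDegree.eq_zero_or_pos with hdeg | hdeg
  · simp [hP.natDegree_eq_zero.1 hdeg]
  have htop := P.tendsto_atTop_of_leadingCoeff_nonneg
    (Polynomial.natDegree_pos_iff_degree_pos.1 hdeg) (by simp [hP.leadingCoeff])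
  obtain ⟨T, hT, haT⟩ :=
    (htop.eventually_gt_atTop 0 |>.and (Filter.eventually_ge_atTop a)).exists
  by_contra! hneg
  obtain ⟨c, hc, hc0⟩ := intermediate_value_Icc haT P.continuous.continuousOn ⟨hneg, hT.le⟩
  exact h c hc.1 hc0

namespace Matrix

def SupportStronglyConnected {ι R : Type*} [Zero R] (M : Matrix ι ι R) : Prop :=
  ∀ S : Set ι, S.Nonempty → (∀ i ∈ S, ∀ k, M i k ≠ 0 → k ∈ S) → S = Set.univ

variable {ι : Type*}

theorem map_intCast_add_single [DecidableEq ι] {R : Type*} [Ring R] (A : Matrix ι ι ℤ)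
    (i j : ι) :
    (A + single i j 1).map (Int.cast : ℤ → R) = A.map Int.cast + single i j 1 := by
  ext k l
  simp [single_apply]

section MaximumPrinciple

variable {R : Type*} [CommRing R] [LinearOrder R] [IsStrictOrderedRing R] {M : Matrix ι ι R}
  {d x y : ι → R} {i : ι}

theorem mul_apply_nonpos_of_offDiag_nonpos (hoff : ∀ i k, i ≠ k → M i k ≤ 0) (hy : 0 ≤ y)
    (hyi : y i = 0) (k : ι) : M i k * y k ≤ 0 := by
  rcases eq_or_ne i k with rfl | hik
  · simp [hyi]
  · exact mul_nonpos_of_nonpos_of_nonneg (hoff i k hik) (hy k)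

variable [Fintype ι]

theorem eq_zero_of_mulVec_apply_eq_zero (hoff : ∀ i k, i ≠ k → M i k ≤ 0) (hy : 0 ≤ y)
    (hyi : y i = 0) (h : (M *ᵥ y) i = 0) {k : ι} (hk : M i k ≠ 0) : y k = 0 :=
  have hterm := (sum_eq_zero_iff_of_nonpos fun k _ ↦
    mul_apply_nonpos_of_offDiag_nonpos hoff hy hyi k).1 h k (mem_univ k)
  (mul_eq_zero.1 hterm).resolve_left hk

variable [DecidableEq ι]

theorem eq_of_mulVec_eq_zero_of_forall_le (hoff : ∀ i k, i ≠ k → M i k ≤ 0)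
    (hrow : M *ᵥ 1 = 0) (hd : 0 ≤ d) (hx : (M + diagonal d) *ᵥ x = 0)
    (hmax : ∀ k, x k ≤ x i) (hxi : 0 ≤ x i) :
    d i * x i = 0 ∧ ∀ k, M i k ≠ 0 → x k = x i := by
  set y := x i • (1 : ι → R) - x
  have hy : 0 ≤ y := fun k ↦ by simpa [y] using hmax k
  have hyi : y i = 0 := by simp [y]
  have hMx : (M *ᵥ x) i = -(d i * x i) := by
    simpa [add_mulVec, mulVec_diagonal, eq_neg_iff_add_eq_zero] using congrFun hx i
  have hMy : (M *ᵥ y) i = d i * x i := by simp [y, mulVec_sub, mulVec_smul, hrow, hMx]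
  have hdx : d i * x i = 0 := le_antisymm
    (hMy ▸ sum_nonpos fun k _ ↦ mul_apply_nonpos_of_offDiag_nonpos hoff hy hyi k)
    (mul_nonneg (hd i) hxi)
  refine ⟨hdx, fun k hk ↦ ?_⟩
  have := eq_zero_of_mulVec_apply_eq_zero hoff hy hyi (hMy.trans hdx) hk
  simpa [y, sub_eq_zero, eq_comm] using this

theorem abs_eq_of_mulVec_eq_zero_of_forall_abs_le (hoff : ∀ i k, i ≠ k → M i k ≤ 0)
    (hrow : M *ᵥ 1 = 0) (hd : 0 ≤ d) (hx : (M + diagonal d) *ᵥ x = 0)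
    (hmax : ∀ k, |x k| ≤ |x i|) :
    d i * |x i| = 0 ∧ ∀ k, M i k ≠ 0 → |x k| = |x i| := by
  wlog hxi : 0 ≤ x i generalizing x
  · simpa using this (x := -x) (by simp [mulVec_neg, hx]) (by simpa using hmax)
      (neg_nonneg.2 (not_le.1 hxi).le)
  rw [abs_of_nonneg hxi] at hmax ⊢
  obtain ⟨hdx, hnbr⟩ := eq_of_mulVec_eq_zero_of_forall_le hoff hrow hd hx
    (fun k ↦ (le_abs_self _).trans (hmax k)) hxi
  exact ⟨hdx, fun k hk ↦ le_antisymm (hmax k) (hnbr k hk ▸ le_abs_self _)⟩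

theorem eq_zero_of_add_diagonal_mulVec_eq_zero (hoff : ∀ i k, i ≠ k → M i k ≤ 0)
    (hrow : M *ᵥ 1 = 0) (hirr : M.SupportStronglyConnected) (hd : 0 ≤ d) (hd0 : d ≠ 0)
    (hx : (M + diagonal d) *ᵥ x = 0) : x = 0 := by
  obtain ⟨j, hj⟩ := Function.ne_iff.1 hd0
  obtain ⟨i₀, -, hmax⟩ := exists_max_image univ (fun k ↦ |x k|) ⟨j, mem_univ j⟩
  have key : ∀ i, |x i| = |x i₀| → d i * |x i₀| = 0 ∧ ∀ k, M i k ≠ 0 → |x k| = |x i₀| :=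
    fun i hi ↦ hi ▸ abs_eq_of_mulVec_eq_zero_of_forall_abs_le hoff hrow hd hx
      fun k ↦ hi ▸ hmax k (mem_univ k)
  have hS := hirr {i | |x i| = |x i₀|} ⟨i₀, rfl⟩ fun i hi k hk ↦ (key i hi).2 k hk
  have hj' : |x j| = |x i₀| := Set.eq_univ_iff_forall.1 hS j
  have hm : |x i₀| = 0 := (mul_eq_zero.1 (key j hj').1).resolve_left hj
  ext k
  simpa [hm] using hmax k (mem_univ k)

end MaximumPrinciple

variable [Fintype ι]

theorem rank_eq_card_sub_one_of_ker_eq_span {K : Type*} [Field K] {A : Matrix ι ι K}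
    {v : ι → K} (hv : v ≠ 0) (hker : LinearMap.ker A.mulVecLin = K ∙ v) :
    A.rank = Fintype.card ι - 1 := by
  have := LinearMap.finrank_range_add_finrank_ker A.mulVecLin
  rw [hker, finrank_span_singleton hv, Module.finrank_fintype_fun_eq_card] at this
  exact Nat.eq_sub_of_add_eq this

variable [DecidableEq ι]

theorem adjugate_apply_eq_of_ker_eq_span_one {R : Type*} [CommRing R] {A : Matrix ι ι R}
    (hdet : A.det = 0) (hker : LinearMap.ker A.mulVecLin = R ∙ 1) (i j k : ι) :
    A.adjugate i k = A.adjugate j k := by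
  have hcol : A.adjugate.col k ∈ LinearMap.ker A.mulVecLin := by
    rw [LinearMap.mem_ker, mulVecLin_apply, ← mulVec_single_one, mulVec_mulVec, mul_adjugate,
      hdet, zero_smul, zero_mulVec]
  obtain ⟨a, ha⟩ := Submodule.mem_span_singleton.1 (hker ▸ hcol)
  simp only [← col_apply A.adjugate, ← ha, Pi.smul_apply, Pi.one_apply]

theorem det_pos_of_forall_det_add_scalar_ne_zero (A : Matrix ι ι ℝ)
    (h : ∀ t, 0 ≤ t → (A + scalar ι t).det ≠ 0) : 0 < A.det := by
  have heval : ∀ t, (-A).charpoly.eval t = (A + scalar ι t).det := fun t ↦ by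
    rw [eval_charpoly, sub_neg_eq_add, add_comm]
  simpa [heval] using (charpoly_monic (-A)).eval_pos_of_forall_le_eval_ne_zero
    fun t ht ↦ heval t ▸ h t ht

theorem det_add_diagonal_pos {M : Matrix ι ι ℝ} {d : ι → ℝ}
    (hoff : ∀ i k, i ≠ k → M i k ≤ 0) (hrow : M *ᵥ 1 = 0) (hirr : M.SupportStronglyConnected)
    (hd : 0 ≤ d) (hd0 : d ≠ 0) :
    0 < (M + diagonal d).det := by
  refine det_pos_of_forall_det_add_scalar_ne_zero _ fun t ht hdet ↦ ?_
  obtain ⟨x, hx0, hx⟩ := exists_mulVec_eq_zero_iff.2 hdet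
  rw [add_assoc, scalar_apply, diagonal_add] at hx
  have hdt : d ≤ d + fun _ ↦ t := le_add_of_nonneg_right fun _ ↦ ht
  exact hx0 <| eq_zero_of_add_diagonal_mulVec_eq_zero hoff hrow hirr (hd.trans hdt)
    (fun h ↦ hd0 (le_antisymm (h ▸ hdt) hd)) hx

section CommRing

variable {R : Type*} [CommRing R]

theorem det_add_single_self (A : Matrix ι ι R) (j : ι) (c : R) :
    (A + single j j c).det = A.det + c * A.adjugate j j := by
  have hrow : A + single j j c = A.updateRow j (A j + c • Pi.single j 1) := by
    ext i k
    rcases eq_or_ne i j with rfl | hij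
    · by_cases hik : i = k <;> simp [hik, eq_comm]
    · simp [hij, Ne.symm hij]
  rw [hrow, det_updateRow_add, det_updateRow_smul, updateRow_eq_self, adjugate_apply]

theorem ker_mulVecLin_eq_span_one [IsDomain R] {L : Matrix ι ι R} (hrow : L *ᵥ 1 = 0) {j : ι}
    (hdet : (L + single j j 1).det ≠ 0) : LinearMap.ker L.mulVecLin = R ∙ 1 := by
  refine le_antisymm (fun x hx ↦ Submodule.mem_span_singleton.2 ⟨x j, ?_⟩) ?_
  · rw [LinearMap.mem_ker, mulVecLin_apply] at hx
    have hy : (L + single j j 1) *ᵥ (x j • 1 - x) = 0 := by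
      simp [add_mulVec, mulVec_sub, mulVec_smul, hrow, hx, single_mulVec_eq]
    exact sub_eq_zero.1 (eq_zero_of_mulVec_eq_zero hdet hy)
  · exact (Submodule.span_singleton_le_iff_mem _ _).2 hrow

end CommRing

end Matrix

open Matrix

section ICB

variable {n : ℕ} {L : Matrix (Fin n) (Fin n) ℤ}

theorem IsCB.mulVec_one_map {R : Type*} [Ring R] (hL : IsCB n L) :
    L.map (Int.cast : ℤ → R) *ᵥ 1 = 0 := by
  obtain ⟨-, -, hrow, -⟩ := hL
  ext i
  simpa [mulVec, dotProduct] using congrArg (Int.cast : ℤ → R) (hrow i)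

theorem IsIrreducibleMat.supportStronglyConnected_map {R : Type*} [AddGroupWithOne R]
    [CharZero R] (hL : IsIrreducibleMat L) :
    (L.map (Int.cast : ℤ → R)).SupportStronglyConnected := fun S hS hclosed ↦ by
  by_contra hne
  refine hL ⟨S, Sᶜ, hS, Set.nonempty_compl.2 hne, disjoint_compl_right, S.union_compl_self,
    fun i hi k hk ↦ ?_⟩
  by_contra hik
  exact hk (hclosed i hi k (by simpa using hik))

theorem IsICB.det_add_single_pos (hL : IsICB n L) (j : Fin n) :
    0 < (L + single j j 1).det := by
  have hpos := det_add_diagonal_pos (M := L.map (Int.cast : ℤ → ℝ)) (d := Pi.single j 1)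
    (fun i k hik ↦ by simpa using hL.1.2.1 i k hik) hL.1.mulVec_one_map
    hL.2.supportStronglyConnected_map (Pi.single_nonneg.2 zero_le_one) (by simp)
  rw [diagonal_single, ← map_intCast_add_single, ← Int.cast_det] at hpos
  exact_mod_cast hpos

theorem IsICB.ker_mulVecLin_map (R : Type*) [CommRing R] [IsDomain R] [CharZero R]
    (hL : IsICB n L) (j : Fin n) :
    LinearMap.ker (L.map (Int.cast : ℤ → R)).mulVecLin = R ∙ 1 := by
  refine ker_mulVecLin_eq_span_one hL.1.mulVec_one_map (j := j) ?_
  rw [← map_intCast_add_single, ← Int.cast_det]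
  exact_mod_cast (hL.det_add_single_pos j).ne'

end ICB

theorem rank_and_adjugate_pos_of_isICB_general (n : ℕ)
    (L : Matrix (Fin n) (Fin n) ℤ) (hL : IsICB n L) :
    (L.map ((↑) : ℤ → ℚ)).rank = n - 1 ∧ ∀ i j : Fin n, 0 < L.adjugate i j := by
  rcases n with _ | n
  · exact ⟨Nat.le_zero.1 (rank_le_width _), fun i ↦ i.elim0⟩
  have hrank := rank_eq_card_sub_one_of_ker_eq_span one_ne_zero (hL.ker_mulVecLin_map ℚ 0)
  refine ⟨by simpa using hrank, fun i j ↦ ?_⟩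
  have hker : LinearMap.ker L.mulVecLin = ℤ ∙ 1 := by
    simpa [show L.map (Int.cast : ℤ → ℤ) = L by ext; simp] using hL.ker_mulVecLin_map ℤ j
  have hdet : L.det = 0 := det_eq_zero_of_mulVec_eq_zero_of_mem_nonZeroDivisors
    (LinearMap.mem_ker.1 (hker ▸ Submodule.mem_span_singleton_self 1)) (i := j) (by simp)
  have hjj : 0 < L.adjugate j j := by
    simpa [det_add_single_self, hdet] using hL.det_add_single_pos j
  exact adjugate_apply_eq_of_ker_eq_span_one hdet hker i j j ▸ hjj

/-- If `L` is an `n × n` ICB matrix, then `L` has rank `n - 1` over `ℚ`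
and every entry of its adjugate matrix is strictly positive. -/
theorem rank_and_adjugate_pos_of_isICB (n : ℕ) (hn : 3 ≤ n)
    (L : Matrix (Fin n) (Fin n) ℤ) (hL : IsICB n L) :
    (L.map ((↑) : ℤ → ℚ)).rank = n - 1 ∧ ∀ i j : Fin n, 0 < L.adjugate i j :=
  rank_and_adjugate_pos_of_isICB_general n L hL
end

section
/- Let L be an n×n integer matrix. Then L is an ICB matrix if and only if L is a CB matrix and every set of n−1 of the rows of L is linearly independent over ℚ. -/
open Finset

/-!
A set of rows of `L` is dependent over `ℚ` exactly when some nonzero `c` with `cᵀL = 0` vanishes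
off it. If `L` is irreducible, such a `c` vanishing at one index is zero by a maximum principle:
pairing `cᵀL = 0` with the indicator of `P = {c > 0}` yields a sum of nonnegative terms, one of
them positive as soon as `P` and its complement are both nonempty, so `c ≤ 0`, and likewise
`-c ≤ 0`. If `L` is reducible along `I ⊔ J`, the rows indexed by `I` have zero sums inside the
`I × I` block, which is therefore singular; a left kernel vector of that block, extended by zero,
is a dependence among the rows avoiding `J`.
-/

open Matrix

variable {ι K : Type*}

section LinearAlgebra

variable [Fintype ι] [DecidableEq ι]

theorem Matrix.linearIndependent_rows_subtype_ne_iff {κ : Type*} [Ring K] (A : Matrix ι κ K)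
    (i : ι) :
    LinearIndependent K (fun j : {j // j ≠ i} => A.row j) ↔
      ∀ c : ι → K, c ᵥ* A = 0 → c i = 0 → c = 0 := by
  have vecMul_eq (c : ι → K) (hc : c i = 0) :
      c ᵥ* A = ∑ j : {j // j ≠ i}, c j • A.row j := by
    rw [vecMul_eq_sum, Fintype.sum_eq_add_sum_subtype_ne _ i, hc, zero_smul, zero_add]; rfl
  refine Fintype.linearIndependent_iff.trans ?_
  constructor
  · intro h c hA hc
    funext j
    by_cases hj : j = i
    · rw [hj, hc, Pi.zero_apply]
    · exact h (fun j => c j) (vecMul_eq c hc ▸ hA) ⟨j, hj⟩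
  · intro h g hg j
    let c : ι → K := fun j => if hj : j = i then 0 else g ⟨j, hj⟩
    have hc : c i = 0 := dif_pos rfl
    have hcA : c ᵥ* A = 0 := by
      rw [vecMul_eq c hc, ← hg]
      exact Finset.sum_congr rfl fun j _ => by simp only [c, dif_neg j.2]
    simpa [c, j.2] using congrFun (h c hcA hc) j

theorem Matrix.exists_vecMul_eq_zero_of_mulVec_one_eq_zero [CommRing K] [IsDomain K] [Nonempty ι]
    {A : Matrix ι ι K} (h : A *ᵥ 1 = 0) : ∃ c ≠ 0, c ᵥ* A = 0 :=
  exists_vecMul_eq_zero_iff.2 (exists_mulVec_eq_zero_iff.1 ⟨1, one_ne_zero, h⟩)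

theorem Matrix.exists_vecMul_eq_zero_of_block [CommRing K] [IsDomain K] {A : Matrix ι ι K}
    (hrow : ∀ i, ∑ j, A i j = 0) {S : Finset ι} (hS : S.Nonempty)
    (hblock : ∀ i ∈ S, ∀ j ∉ S, A i j = 0) :
    ∃ c ≠ 0, (∀ j ∉ S, c j = 0) ∧ c ᵥ* A = 0 := by
  have : Nonempty S := hS.to_subtype
  let B : Matrix S S K := A.submatrix (↑) (↑)
  have hB : B *ᵥ 1 = 0 := by
    funext a
    simp only [mulVec, dotProduct, Pi.one_apply, mul_one, Pi.zero_apply, B, submatrix_apply]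
    rw [Finset.sum_coe_sort S (A a), ← hrow a]
    exact Finset.sum_subset (subset_univ S) fun j _ hj => hblock a a.2 j hj
  obtain ⟨v, hv, hvB⟩ := exists_vecMul_eq_zero_of_mulVec_one_eq_zero hB
  let c : ι → K := fun j => if hj : j ∈ S then v ⟨j, hj⟩ else 0
  have hcS : ∀ j ∉ S, c j = 0 := fun j hj => dif_neg hj
  have hcA (k : ι) : (c ᵥ* A) k = ∑ a : S, v a * A a k := by
    simp only [vecMul, dotProduct]
    rw [← Finset.sum_subset (subset_univ S) fun j _ hj => by rw [hcS j hj, zero_mul],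
      ← Finset.sum_coe_sort S]
    exact Finset.sum_congr rfl fun a _ => by simp only [c, dif_pos a.2]
  refine ⟨c, fun hc => hv (funext fun a => ?_), hcS, funext fun k => ?_⟩
  · simpa [c, a.2] using congrFun hc a
  rw [hcA, Pi.zero_apply]
  by_cases hk : k ∈ S
  · exact congrFun hvB ⟨k, hk⟩
  · exact Finset.sum_eq_zero fun a _ => by rw [hblock a a.2 k hk, mul_zero]

end LinearAlgebra

section MaximumPrinciple

variable [CommRing K] [LinearOrder K] [IsStrictOrderedRing K] {A : Matrix ι ι K}

theorem Matrix.sum_le_of_notMem (hoff : ∀ i j, i ≠ j → A i j ≤ 0) {T : Finset ι} {j b : ι}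
    (hj : j ∉ T) (hb : b ∈ T) : ∑ k ∈ T, A j k ≤ A j b := by
  rw [← Finset.sum_singleton (A j) b]
  exact Finset.sum_le_sum_of_subset_of_nonpos' (singleton_subset_iff.2 hb)
    fun k hk _ => hoff j k (ne_of_mem_of_not_mem hk hj).symm

theorem Matrix.sum_nonpos_of_notMem (hoff : ∀ i j, i ≠ j → A i j ≤ 0) {T : Finset ι}
    {j : ι} (hj : j ∉ T) : ∑ k ∈ T, A j k ≤ 0 :=
  Finset.sum_nonpos fun k hk => hoff j k (ne_of_mem_of_not_mem hk hj).symm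

variable [Fintype ι] [DecidableEq ι]

theorem Matrix.sum_nonneg_of_mem (hoff : ∀ i j, i ≠ j → A i j ≤ 0)
    (hrow : ∀ i, ∑ j, A i j = 0) {S : Finset ι} {j : ι} (hj : j ∈ S) :
    0 ≤ ∑ k ∈ S, A j k := by
  have := Finset.sum_add_sum_compl S (A j)
  linarith [hrow j, sum_nonpos_of_notMem hoff (notMem_compl.2 hj)]

theorem Matrix.sum_pos_of_mem (hoff : ∀ i j, i ≠ j → A i j ≤ 0)
    (hrow : ∀ i, ∑ j, A i j = 0) {S : Finset ι} {j b : ι} (hj : j ∈ S) (hb : b ∉ S)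
    (hjb : A j b ≠ 0) : 0 < ∑ k ∈ S, A j k := by
  have := Finset.sum_add_sum_compl S (A j)
  have hjb' : A j b < 0 := (hoff j b (ne_of_mem_of_not_mem hj hb)).lt_of_ne hjb
  linarith [hrow j, sum_le_of_notMem hoff (notMem_compl.2 hj) (mem_compl.2 hb)]

theorem Matrix.nonpos_of_vecMul_eq_zero (hoff : ∀ i j, i ≠ j → A i j ≤ 0)
    (hrow : ∀ i, ∑ j, A i j = 0)
    (hirr : ∀ S : Finset ι, S.Nonempty → Sᶜ.Nonempty → ∃ i ∈ S, ∃ j ∉ S, A i j ≠ 0)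
    {c : ι → K} (hc : c ᵥ* A = 0) {i : ι} (hi : c i ≤ 0) : c ≤ 0 := by
  by_contra hpos
  obtain ⟨j₀, hj₀⟩ : ∃ j, 0 < c j := by simpa [Pi.le_def] using hpos
  set P := univ.filter (0 < c ·)
  have memP (j : ι) : j ∈ P ↔ 0 < c j := by simp [P]
  obtain ⟨a, ha, b, hb, hab⟩ :=
    hirr P ⟨j₀, (memP j₀).2 hj₀⟩ ⟨i, mem_compl.2 fun h => ((memP i).1 h).not_ge hi⟩
  have hsum : ∑ j, c j * ∑ k ∈ P, A j k = 0 := by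
    simp_rw [Finset.mul_sum]
    rw [Finset.sum_comm]
    exact Finset.sum_eq_zero fun k _ => congrFun hc k
  have hterm (j : ι) : 0 ≤ c j * ∑ k ∈ P, A j k := by
    by_cases hj : j ∈ P
    · exact mul_nonneg ((memP j).1 hj).le (sum_nonneg_of_mem hoff hrow hj)
    · exact mul_nonneg_of_nonpos_of_nonpos (not_lt.1 (mt (memP j).2 hj))
        (sum_nonpos_of_notMem hoff hj)
  have hterm_a : 0 < c a * ∑ k ∈ P, A a k :=
    mul_pos ((memP a).1 ha) (sum_pos_of_mem hoff hrow ha hb hab)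
  exact (Finset.sum_pos' (fun j _ => hterm j) ⟨a, mem_univ a, hterm_a⟩).ne' hsum

end MaximumPrinciple

theorem isIrreducibleMat_iff {n : ℕ} (M : Matrix (Fin n) (Fin n) ℤ) :
    IsIrreducibleMat M ↔
      ∀ S : Finset (Fin n), S.Nonempty → Sᶜ.Nonempty → ∃ i ∈ S, ∃ j ∉ S, M i j ≠ 0 := by
  constructor
  · intro h S hS hSc
    by_contra hzero
    push Not at hzero
    refine h ⟨S, ((Sᶜ : Finset (Fin n)) : Set (Fin n)), by simpa using hS, coe_nonempty.2 hSc,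
      ?_, by simp, ?_⟩
    · simpa using disjoint_compl_right
    · simpa using hzero
  · rintro h ⟨I, J, hI, hJ, hdisj, hunion, hzero⟩
    classical
    obtain ⟨j₀, hj₀⟩ := hJ
    obtain ⟨i, hi, j, hj, hij⟩ := h I.toFinset (by simpa using hI)
      ⟨j₀, by simpa using hdisj.notMem_of_mem_right hj₀⟩
    have hjJ : j ∈ J := (hunion ▸ Set.mem_univ j).resolve_left (by simpa using hj)
    exact hij (hzero i (by simpa using hi) j hjJ)

theorem isICB_iff_isCB_and_rows_linearIndependent_general (n : ℕ)
    (L : Matrix (Fin n) (Fin n) ℤ) :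
    IsICB n L ↔ IsCB n L ∧
      ∀ i : Fin n, LinearIndependent ℚ
        (fun j : {j : Fin n // j ≠ i} => fun k : Fin n => (L j.1 k : ℚ)) := by
  refine and_congr_right fun ⟨_, hoff, hrow, _⟩ => ?_
  set A : Matrix (Fin n) (Fin n) ℚ := L.map (↑)
  have hoffA (i j : Fin n) (hij : i ≠ j) : A i j ≤ 0 := Int.cast_nonpos.2 (hoff i j hij)
  have hrowA (i : Fin n) : ∑ j, A i j = 0 := by
    simp only [A, map_apply]
    exact_mod_cast hrow i
  have hzeroA (i j : Fin n) : L i j = 0 ↔ A i j = 0 := Int.cast_eq_zero.symm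
  simp only [isIrreducibleMat_iff, ne_eq, hzeroA]
  constructor
  · intro hirr i
    refine (linearIndependent_rows_subtype_ne_iff A i).2 fun c hc hci => ?_
    refine le_antisymm (nonpos_of_vecMul_eq_zero hoffA hrowA hirr hc hci.le) ?_
    have hneg : -c ᵥ* A = 0 := by rw [neg_vecMul, hc, neg_zero]
    exact neg_nonpos.1 (nonpos_of_vecMul_eq_zero hoffA hrowA hirr hneg (i := i) (by simp [hci]))
  · intro hli
    by_contra hred
    push Not at hred
    obtain ⟨S, hS, ⟨b, hb⟩, hblock⟩ := hred
    obtain ⟨c, hc, hcS, hcA⟩ := exists_vecMul_eq_zero_of_block hrowA hS hblock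
    exact hc ((linearIndependent_rows_subtype_ne_iff A b).1 (hli b) c hcA
      (hcS b (mem_compl.1 hb)))

/-- An `n × n` integer matrix `L` is an ICB matrix if and only if it is a
CB matrix and every set of `n - 1` of its rows is linearly independent over `ℚ`. -/
theorem isICB_iff_isCB_and_rows_linearIndependent (n : ℕ) (hn : 3 ≤ n)
    (L : Matrix (Fin n) (Fin n) ℤ) :
    IsICB n L ↔ IsCB n L ∧
      ∀ i : Fin n, LinearIndependent ℚ
        (fun j : {j : Fin n // j ≠ i} => fun k : Fin n => (L j.1 k : ℚ)) :=
  isICB_iff_isCB_and_rows_linearIndependent_general n L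
end

section
/- Let L be an n×n ICB matrix and K a field. Then for every i ∈ {1,…,n}, the radical of the ideal I(L) + (x_i) of K[x₁,…,xₙ] equals the maximal ideal 𝔪 = (x₁,…,xₙ). -/
open MvPolynomial Finset

def IsPCB (n : ℕ) (L : Matrix (Fin n) (Fin n) ℤ) : Prop :=
  IsCB n L ∧ ∀ i j : Fin n, i ≠ j → L i j < 0

noncomputable def posPart {n : ℕ} (m : Fin n → ℤ) : Fin n →₀ ℕ :=
  Finsupp.equivFunOnFinite.symm fun i => (m i).toNat

noncomputable def negPart {n : ℕ} (m : Fin n → ℤ) : Fin n →₀ ℕ :=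
  Finsupp.equivFunOnFinite.symm fun i => (-(m i)).toNat

noncomputable def binom (K : Type*) [Field K] {n : ℕ} (m : Fin n → ℤ) :
    MvPolynomial (Fin n) K :=
  monomial (posPart m) 1 - monomial (negPart m) 1

def colLattice {n : ℕ} (L : Matrix (Fin n) (Fin n) ℤ) : AddSubgroup (Fin n → ℤ) :=
  AddSubgroup.closure {v | ∃ j : Fin n, v = fun i => L i j}

noncomputable def latticeIdeal (K : Type*) [Field K] {n : ℕ} (L : Matrix (Fin n) (Fin n) ℤ) :
    Ideal (MvPolynomial (Fin n) K) :=
  Ideal.span {f | ∃ m ∈ colLattice L, f = binom K m}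

noncomputable def matrixIdeal (K : Type*) [Field K] {n : ℕ} (L : Matrix (Fin n) (Fin n) ℤ) :
    Ideal (MvPolynomial (Fin n) K) :=
  Ideal.span {f | ∃ j : Fin n, f = binom K fun i => L i j}

def chi {n : ℕ} (C : Finset (Fin n)) : Fin n → ℤ := fun i => if i ∈ C then 1 else 0

/-!
Since `𝔪 = (x₁, …, xₙ)` is prime, the inclusion `√(I(L) + (xᵢ)) ⊆ 𝔪` only needs every column
binomial to lie in `𝔪`, which holds because each column has a positive and a negative entry.
Conversely, the positive part of column `j` is `L j j` at `j`, so the column binomial reads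
`x_j ^ L j j ≡ x^{(l_{*,j})⁻}`: once some `x_k` with `L k j < 0` lies in the radical, so does `x_j`.
Starting from `xᵢ`, irreducibility of `L` makes this propagation reach every variable.
-/

namespace MvPolynomial

variable {σ R : Type*} [CommSemiring R]

theorem span_range_X_eq_ker_constantCoeff :
    Ideal.span (Set.range (X : σ → MvPolynomial σ R)) = RingHom.ker constantCoeff := by
  ext f
  rw [← Set.image_univ, mem_ideal_span_X_image, RingHom.mem_ker]
  refine ⟨fun h => ?_, fun h m hm => ?_⟩
  · by_contra hc
    obtain ⟨i, -, hi⟩ := h 0 (by simpa [mem_support_iff, constantCoeff_eq] using hc)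
    simp at hi
  · obtain ⟨i, hi⟩ := Finsupp.ne_iff.mp (show m ≠ 0 by rintro rfl; simp_all [constantCoeff_eq])
    exact ⟨i, trivial, hi⟩

theorem isPrime_span_range_X [IsDomain R] :
    (Ideal.span (Set.range (X : σ → MvPolynomial σ R))).IsPrime := by
  rw [span_range_X_eq_ker_constantCoeff]
  exact RingHom.ker_isPrime _

theorem monomial_mem_of_X_mem {I : Ideal (MvPolynomial σ R)} {i : σ} {m : σ →₀ ℕ} (r : R)
    (hX : X i ∈ I) (hm : m i ≠ 0) : monomial m r ∈ I :=
  I.mem_of_dvd (X_dvd_monomial.mpr (Or.inr hm)) hX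

end MvPolynomial

section Binomial

variable {n : ℕ} {K : Type*} [Field K]

theorem posPart_eq_single {m : Fin n → ℤ} {j : Fin n} (hm : ∀ k, k ≠ j → m k ≤ 0) :
    _root_.posPart m = Finsupp.single j (m j).toNat := by
  ext k
  rcases eq_or_ne k j with rfl | hkj
  · simp [_root_.posPart]
  · simp [_root_.posPart, hkj.symm, Int.toNat_of_nonpos (hm k hkj)]

theorem binom_mem_span_range_X {m : Fin n → ℤ} (hpos : ∃ k, 0 < m k) (hneg : ∃ l, m l < 0) :
    binom K m ∈ Ideal.span (Set.range X) := by
  obtain ⟨k, hk⟩ := hpos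
  obtain ⟨l, hl⟩ := hneg
  refine sub_mem (monomial_mem_of_X_mem _ (Ideal.subset_span ⟨k, rfl⟩) ?_)
    (monomial_mem_of_X_mem _ (Ideal.subset_span ⟨l, rfl⟩) ?_)
  all_goals simp only [_root_.posPart, _root_.negPart, Finsupp.coe_equivFunOnFinite_symm]; omega

theorem X_mem_radical_of_binom_mem {I : Ideal (MvPolynomial (Fin n) K)} {m : Fin n → ℤ}
    {j k : Fin n} (hm : ∀ l, l ≠ j → m l ≤ 0) (hbinom : binom K m ∈ I) (hk : m k < 0)
    (hX : X k ∈ I.radical) : X j ∈ I.radical := by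
  have hpow : (X j : MvPolynomial (Fin n) K) ^ (m j).toNat =
      binom K m + monomial (_root_.negPart m) 1 := by
    rw [binom, posPart_eq_single hm, ← X_pow_eq_monomial]
    ring
  have hnegPart : _root_.negPart m k ≠ 0 := by
    simp only [_root_.negPart, Finsupp.coe_equivFunOnFinite_symm]
    omega
  rw [← I.radical_idem]
  refine ⟨(m j).toNat, hpow ▸ add_mem (I.le_radical hbinom) ?_⟩
  exact monomial_mem_of_X_mem _ hX hnegPart

end Binomial

theorem IsIrreducibleMat.eq_univ {n : ℕ} {M : Matrix (Fin n) (Fin n) ℤ} (hM : IsIrreducibleMat M)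
    {S : Set (Fin n)} (hS : S.Nonempty) (hclosed : ∀ k ∈ S, ∀ j, k ≠ j → M k j ≠ 0 → j ∈ S) :
    S = Set.univ := by
  by_contra hne
  refine hM ⟨S, Sᶜ, hS, Set.nonempty_compl.mpr hne, disjoint_compl_right, S.union_compl_self,
    fun k hk j hj => ?_⟩
  by_contra hkj
  exact hj (hclosed k hk j (fun h => hj (h ▸ hk)) hkj)

theorem matrixIdeal_le_span_range_X {n : ℕ} {L : Matrix (Fin n) (Fin n) ℤ} (hL : IsCB n L)
    (K : Type*) [Field K] : matrixIdeal K L ≤ Ideal.span (Set.range X) := by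
  obtain ⟨hdiag, hoff, -, hcol⟩ := hL
  refine Ideal.span_le.mpr ?_
  rintro f ⟨j, rfl⟩
  obtain ⟨k, hkj, hk⟩ := hcol j
  exact binom_mem_span_range_X ⟨j, hdiag j⟩ ⟨k, (hoff k j hkj).lt_of_ne hk⟩

theorem radical_matrixIdeal_sup_var_general (n : ℕ)
    (L : Matrix (Fin n) (Fin n) ℤ) (hL : IsICB n L)
    (K : Type*) [Field K] :
    ∀ i : Fin n,
      (matrixIdeal K L ⊔ Ideal.span {(X i : MvPolynomial (Fin n) K)}).radical =
        Ideal.span (Set.range (X : Fin n → MvPolynomial (Fin n) K)) := by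
  obtain ⟨hCB, hirr⟩ := hL
  have hoff : ∀ k j, k ≠ j → L k j ≤ 0 := hCB.2.1
  intro i
  set I := matrixIdeal K L ⊔ Ideal.span {(X i : MvPolynomial (Fin n) K)}
  refine le_antisymm ?_ ?_
  · rw [isPrime_span_range_X.radical_le_iff]
    exact sup_le (matrixIdeal_le_span_range_X hCB K)
      (Ideal.span_le.mpr (Set.singleton_subset_iff.mpr (Ideal.subset_span ⟨i, rfl⟩)))
  · have hX_mem : {j | X j ∈ I.radical} = Set.univ := by
      refine hirr.eq_univ ⟨i, I.le_radical (Ideal.mem_sup_right (Ideal.mem_span_singleton_self _))⟩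
        fun k hk j hkj hLkj => ?_
      exact X_mem_radical_of_binom_mem (fun l hl => hoff l j hl)
        (Ideal.mem_sup_left (Ideal.subset_span ⟨j, rfl⟩)) ((hoff k j hkj).lt_of_ne hLkj) hk
    exact Ideal.span_le.mpr (Set.range_subset_iff.mpr (Set.eq_univ_iff_forall.mp hX_mem))

/-- If `L` is an `n × n` ICB matrix and `K` a field, then for every
`i ∈ {1,…,n}`, the radical of `I(L) + (xᵢ)` equals the maximal ideal `𝔪 = (x₁,…,xₙ)`. -/
theorem radical_matrixIdeal_sup_var (n : ℕ) (hn : 3 ≤ n)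
    (L : Matrix (Fin n) (Fin n) ℤ) (hL : IsICB n L)
    (K : Type*) [Field K] :
    ∀ i : Fin n,
      (matrixIdeal K L ⊔ Ideal.span {(X i : MvPolynomial (Fin n) K)}).radical =
        Ideal.span (Set.range (X : Fin n → MvPolynomial (Fin n) K)) :=
  radical_matrixIdeal_sup_var_general n L hL K
end

section
/- Let L be an n×n CB matrix and K a field. Then the Cyc sequence of L is a chain complex of free K[x]-modules; that is, ∂_{k−1} ∘ ∂_k = 0 for every k with 2 ≤ k ≤ n−1. -/
open MvPolynomial Finset

/-- Cyclically ordered partitions of `{0,…,n-1}` into `k+1` nonempty (ordered) blocks,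
normalized so that the last vertex lies in the last block: encoded as surjections
`b : Fin n → Fin (k+1)` sending the last vertex to the last block; the blocks are the
fibers `I_s = b⁻¹(s)`. -/
def CycB (n k : ℕ) : Type :=
  {b : Fin n → Fin (k + 1) //
    Function.Surjective b ∧ ∀ h : n - 1 < n, b ⟨n - 1, h⟩ = Fin.last k}

/-- The `s`-th block of a cyclically ordered partition. -/
def block {n k : ℕ} (b : CycB n k) (s : Fin (k + 1)) : Finset (Fin n) :=
  Finset.univ.filter fun i => b.1 i = s

/-- The monomial `x^{S → T} = ∏_{i ∈ S} xᵢ^{Σ_{j ∈ T} a i j}`, where `a i j = -L i j`. -/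
noncomputable def xArrow (K : Type*) [Field K] {n : ℕ} (L : Matrix (Fin n) (Fin n) ℤ)
    (S T : Finset (Fin n)) : MvPolynomial (Fin n) K :=
  ∏ i ∈ S, X i ^ (∑ j ∈ T, (-L i j).toNat)

/-- The map `Fin (k+2) → Fin (k+1)` collapsing the adjacent indices `s` and `s+1`. -/
def collapseAt {k : ℕ} (s : Fin (k + 1)) (t : Fin (k + 2)) : Fin (k + 1) :=
  if h : t.val ≤ s.val then ⟨t.val, lt_of_le_of_lt h s.isLt⟩
  else ⟨t.val - 1, by have := t.isLt; omega⟩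

lemma collapseAt_surjective {k : ℕ} (s : Fin (k + 1)) :
    Function.Surjective (collapseAt s) := by
  intro u
  by_cases h : u.val ≤ s.val
  · exact ⟨⟨u.val, by have := u.isLt; omega⟩, by simp [collapseAt, h]⟩
  · refine ⟨⟨u.val + 1, by have := u.isLt; omega⟩, ?_⟩
    simp only [collapseAt]
    rw [dif_neg (by omega)]
    simp

/-- The map `Fin (k+2) → Fin (k+1)` collapsing the first and last indices (cyclically)
into the last index, shifting the others down by one. -/
def collapseCyc {k : ℕ} (t : Fin (k + 2)) : Fin (k + 1) :=
  if t.val = 0 ∨ t.val = k + 1 then Fin.last k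
  else ⟨t.val - 1, by have := t.isLt; omega⟩

lemma collapseCyc_surjective {k : ℕ} : Function.Surjective (collapseCyc (k := k)) := by
  intro u
  by_cases h : u = Fin.last k
  · exact ⟨0, by simp [collapseCyc, h]⟩
  · have hu : u.val < k := by
      have := u.isLt
      rcases lt_or_eq_of_le (Nat.lt_succ_iff.mp this) with h' | h'
      · exact h'
      · exact absurd (Fin.ext h') h
    refine ⟨⟨u.val + 1, by omega⟩, ?_⟩
    simp only [collapseCyc]
    rw [if_neg (by omega)]
    simp

/-- Merging blocks `s` and `s+1` of a cyclically ordered partition with `k+2` blocks. -/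
def mergeAdj {n k : ℕ} (b : CycB n (k + 1)) (s : Fin (k + 1)) : CycB n k :=
  ⟨collapseAt s ∘ b.1, (collapseAt_surjective s).comp b.2.1, by
    intro h
    have hb := b.2.2 h
    have hs := s.isLt
    simp only [Function.comp_apply, hb]
    unfold collapseAt
    rw [dif_neg (by simp only [Fin.val_last]; omega)]
    ext
    simp⟩

/-- Merging the first and last blocks of a cyclically ordered partition with `k+2`
blocks, cyclically. -/
def mergeCyc {n k : ℕ} (b : CycB n (k + 1)) : CycB n k :=
  ⟨collapseCyc ∘ b.1, collapseCyc_surjective.comp b.2.1, by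
    intro h
    have hb := b.2.2 h
    simp only [Function.comp_apply, hb]
    simp [collapseCyc, Fin.last]⟩

/-- The image under the differential of a single basis element `(I₁,…,I_{k+2})`:
`∑ₛ (-1)^{s-1} x^{I_s→I_{s+1}} (I₁,…,I_s ∪ I_{s+1},…,I_{k+2})
  - x^{I_{k+2}→I₁} (I₂,…,I_{k+1},I₁ ∪ I_{k+2})`. -/
noncomputable def diffSingle (K : Type*) [Field K] {n : ℕ} (L : Matrix (Fin n) (Fin n) ℤ)
    {k : ℕ} (b : CycB n (k + 1)) : CycB n k →₀ MvPolynomial (Fin n) K :=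
  (∑ s : Fin (k + 1),
      Finsupp.single (mergeAdj b s)
        ((-1 : MvPolynomial (Fin n) K) ^ (s : ℕ) *
          xArrow K L (block b s.castSucc) (block b s.succ)))
    - Finsupp.single (mergeCyc b)
        (xArrow K L (block b (Fin.last (k + 1))) (block b 0))

/-- The differential `∂_{k+1} : 𝒞_{k+1} → 𝒞_k` of the Cyc complex. -/
noncomputable def cycDiff (K : Type*) [Field K] {n : ℕ} (L : Matrix (Fin n) (Fin n) ℤ)
    (k : ℕ) :
    (CycB n (k + 1) →₀ MvPolynomial (Fin n) K) →ₗ[MvPolynomial (Fin n) K]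
      (CycB n k →₀ MvPolynomial (Fin n) K) :=
  Finsupp.lsum (MvPolynomial (Fin n) K) fun b =>
    LinearMap.toSpanSingleton (MvPolynomial (Fin n) K) _ (diffSingle K L b)

/-! The terms of `∂ (∂ b)` cancel in pairs. Merging adjacent blocks at gap `u + 1` and then
at `t ≤ u` gives the same partition as merging at `t` and then at `u`, with opposite signs;
the monomials agree because either the two merges are far apart, or three consecutive blocks
`I, J, M` are merged and `x^{I→J} x^{I∪J→M} = x^{J→M} x^{I→J∪M}`. In the same way the cyclic
merge after an adjacent merge at gap `u + 1` cancels the adjacent merge at gap `u` after the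
cyclic one, and the cyclic merge after the adjacent merge at gap `0` cancels the double
cyclic merge. -/

section Monomials

variable (K : Type*) [Field K] {n : ℕ} (L : Matrix (Fin n) (Fin n) ℤ)

lemma xArrow_union_left {S S' T : Finset (Fin n)} (h : Disjoint S S') :
    xArrow K L (S ∪ S') T = xArrow K L S T * xArrow K L S' T :=
  prod_union h

lemma xArrow_union_right {S T T' : Finset (Fin n)} (h : Disjoint T T') :
    xArrow K L S (T ∪ T') = xArrow K L S T * xArrow K L S T' := by
  simp only [xArrow, sum_union h, pow_add, prod_mul_distrib]

lemma xArrow_mul_xArrow_union {I J M : Finset (Fin n)} (hIJ : Disjoint I J)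
    (hJM : Disjoint J M) :
    xArrow K L I J * xArrow K L (I ∪ J) M = xArrow K L J M * xArrow K L I (J ∪ M) := by
  rw [xArrow_union_left K L hIJ, xArrow_union_right K L hJM]
  ring

end Monomials

section Blocks

variable {n : ℕ}

lemma block_disjoint {k : ℕ} (b : CycB n k) {s t : Fin (k + 1)} (h : s ≠ t) :
    Disjoint (block b s) (block b t) :=
  disjoint_filter.2 fun _ _ hs ht => h (hs.symm.trans ht)

lemma block_eq_biUnion_of_comp {k l : ℕ} {b : CycB n k} {b' : CycB n l}
    {f : Fin (k + 1) → Fin (l + 1)} (hf : b'.1 = f ∘ b.1) {u : Fin (l + 1)}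
    {S : Finset (Fin (k + 1))} (hS : ∀ v, f v = u ↔ v ∈ S) :
    block b' u = S.biUnion (block b) := by
  ext i
  simp [block, hf, hS]

lemma collapseAt_val {k : ℕ} (s : Fin (k + 1)) (v : Fin (k + 2)) :
    (collapseAt s v).val = if v.val ≤ s.val then v.val else v.val - 1 := by
  unfold collapseAt; split_ifs <;> rfl

lemma collapseCyc_val {k : ℕ} (v : Fin (k + 2)) :
    (collapseCyc v).val = if v.val = 0 ∨ v.val = k + 1 then k else v.val - 1 := by
  unfold collapseCyc; split_ifs <;> rfl

variable {k : ℕ} (b : CycB n (k + 1))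

lemma block_mergeAdj_of_lt {s u : Fin (k + 1)} (h : u < s) :
    block (mergeAdj b s) u = block b u.castSucc := by
  rw [block_eq_biUnion_of_comp (b := b) (f := collapseAt s) (S := {u.castSucc}) rfl,
    singleton_biUnion]
  intro v
  simp only [mem_singleton, Fin.ext_iff, collapseAt_val, Fin.val_castSucc]
  rw [Fin.lt_def] at h
  split_ifs <;> omega

lemma block_mergeAdj_self (s : Fin (k + 1)) :
    block (mergeAdj b s) s = block b s.castSucc ∪ block b s.succ := by
  rw [block_eq_biUnion_of_comp (b := b) (f := collapseAt s) (S := {s.castSucc, s.succ}) rfl,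
    biUnion_insert, singleton_biUnion]
  intro v
  simp only [mem_insert, mem_singleton, Fin.ext_iff, collapseAt_val, Fin.val_castSucc,
    Fin.val_succ]
  split_ifs <;> omega

lemma block_mergeAdj_of_gt {s u : Fin (k + 1)} (h : s < u) :
    block (mergeAdj b s) u = block b u.succ := by
  rw [block_eq_biUnion_of_comp (b := b) (f := collapseAt s) (S := {u.succ}) rfl,
    singleton_biUnion]
  intro v
  simp only [mem_singleton, Fin.ext_iff, collapseAt_val, Fin.val_succ]
  rw [Fin.lt_def] at h
  split_ifs <;> omega

lemma block_mergeCyc_last :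
    block (mergeCyc b) (Fin.last k) = block b (Fin.last (k + 1)) ∪ block b 0 := by
  rw [block_eq_biUnion_of_comp (b := b) (f := collapseCyc) (S := {Fin.last (k + 1), 0}) rfl,
    biUnion_insert, singleton_biUnion]
  intro v
  simp only [mem_insert, mem_singleton, Fin.ext_iff, collapseCyc_val, Fin.val_last,
    Fin.val_zero]
  split_ifs <;> omega

lemma block_mergeCyc_castSucc (u : Fin k) :
    block (mergeCyc b) u.castSucc = block b u.succ.castSucc := by
  rw [block_eq_biUnion_of_comp (b := b) (f := collapseCyc) (S := {u.succ.castSucc}) rfl,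
    singleton_biUnion]
  intro v
  have := u.isLt
  simp only [mem_singleton, Fin.ext_iff, collapseCyc_val, Fin.val_castSucc, Fin.val_succ]
  split_ifs <;> omega

end Blocks

section Merges

variable {n m : ℕ} (b : CycB n (m + 2))

lemma mergeAdj_mergeAdj_of_le {t u : Fin (m + 1)} (h : t ≤ u) :
    mergeAdj (mergeAdj b u.succ) t = mergeAdj (mergeAdj b t.castSucc) u := by
  refine Subtype.ext (funext fun i => Fin.ext ?_)
  change (collapseAt t (collapseAt u.succ (b.1 i))).val =
    (collapseAt u (collapseAt t.castSucc (b.1 i))).val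
  rw [Fin.le_def] at h
  simp only [collapseAt_val, Fin.val_castSucc, Fin.val_succ]
  split_ifs <;> omega

lemma mergeCyc_mergeAdj_succ (t : Fin (m + 1)) :
    mergeCyc (mergeAdj b t.succ) = mergeAdj (mergeCyc b) t := by
  refine Subtype.ext (funext fun i => Fin.ext ?_)
  change (collapseCyc (collapseAt t.succ (b.1 i))).val =
    (collapseAt t (collapseCyc (b.1 i))).val
  have := (b.1 i).isLt
  simp only [collapseAt_val, collapseCyc_val, Fin.val_succ]
  split_ifs <;> omega

lemma mergeCyc_mergeAdj_zero : mergeCyc (mergeAdj b 0) = mergeCyc (mergeCyc b) := by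
  refine Subtype.ext (funext fun i => Fin.ext ?_)
  change (collapseCyc (collapseAt 0 (b.1 i))).val = (collapseCyc (collapseCyc (b.1 i))).val
  have := (b.1 i).isLt
  simp only [collapseAt_val, collapseCyc_val, Fin.val_zero]
  grind

end Merges

section MergeOrder

variable {m : ℕ}

/-- A pair `(s, t)` stands for "merge at gap `s`, then at gap `t`". The swap exchanges
`(u + 1, t)` and `(t, u)` for `t ≤ u`, the two orders of merging the same two gaps. -/
def mergeOrderSwap (p : Fin (m + 2) × Fin (m + 1)) : Fin (m + 2) × Fin (m + 1) :=
  if h : p.2.castSucc < p.1 then (p.2.castSucc, p.1.pred (Fin.ne_zero_of_lt h))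
  else (p.2.succ, p.1.castLT (lt_of_le_of_lt (not_lt.1 h) (Fin.castSucc_lt_last p.2)))

lemma exists_le_eq_succ_or_eq_castSucc (p : Fin (m + 2) × Fin (m + 1)) :
    ∃ t u : Fin (m + 1), t ≤ u ∧ (p = (u.succ, t) ∨ p = (t.castSucc, u)) := by
  obtain ⟨s, t⟩ := p
  by_cases h : t.castSucc < s
  · obtain ⟨u, rfl⟩ := Fin.exists_succ_eq.2 (Fin.ne_zero_of_lt h)
    exact ⟨t, u, Fin.castSucc_lt_succ_iff.1 h, Or.inl rfl⟩
  · obtain ⟨t', rfl⟩ | rfl := Fin.eq_castSucc_or_eq_last s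
    · exact ⟨t', t, not_lt.1 (Fin.castSucc_lt_castSucc_iff.not.1 h), Or.inr rfl⟩
    · exact absurd (Fin.castSucc_lt_last t) h

lemma mergeOrderSwap_succ {t u : Fin (m + 1)} (h : t ≤ u) :
    mergeOrderSwap (u.succ, t) = (t.castSucc, u) := by
  simp [mergeOrderSwap, Fin.castSucc_lt_succ_iff.2 h]

lemma mergeOrderSwap_castSucc {t u : Fin (m + 1)} (h : t ≤ u) :
    mergeOrderSwap (t.castSucc, u) = (u.succ, t) := by
  simp [mergeOrderSwap, h]

lemma mergeOrderSwap_involutive : Function.Involutive (mergeOrderSwap (m := m)) := by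
  intro p
  obtain ⟨t, u, h, rfl | rfl⟩ := exists_le_eq_succ_or_eq_castSucc p
  · rw [mergeOrderSwap_succ h, mergeOrderSwap_castSucc h]
  · rw [mergeOrderSwap_castSucc h, mergeOrderSwap_succ h]

lemma mergeOrderSwap_ne (p : Fin (m + 2) × Fin (m + 1)) : mergeOrderSwap p ≠ p := by
  obtain ⟨t, u, h, rfl | rfl⟩ := exists_le_eq_succ_or_eq_castSucc p
  · rw [mergeOrderSwap_succ h]
    exact fun e => (Fin.castSucc_lt_succ_iff.2 h).ne (congrArg Prod.fst e)
  · rw [mergeOrderSwap_castSucc h]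
    exact fun e => (Fin.castSucc_lt_succ_iff.2 h).ne' (congrArg Prod.fst e)

end MergeOrder

section Coefficients

variable (K : Type*) [Field K] {n : ℕ} (L : Matrix (Fin n) (Fin n) ℤ)

noncomputable def adjCoeff {k : ℕ} (b : CycB n (k + 1)) (s : Fin (k + 1)) :
    MvPolynomial (Fin n) K :=
  (-1) ^ (s : ℕ) * xArrow K L (block b s.castSucc) (block b s.succ)

noncomputable def cycCoeff {k : ℕ} (b : CycB n (k + 1)) : MvPolynomial (Fin n) K :=
  xArrow K L (block b (Fin.last (k + 1))) (block b 0)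

lemma diffSingle_eq {k : ℕ} (b : CycB n (k + 1)) :
    diffSingle K L b =
      (∑ s, Finsupp.single (mergeAdj b s) (adjCoeff K L b s))
        - Finsupp.single (mergeCyc b) (cycCoeff K L b) := rfl

variable {m : ℕ} (b : CycB n (m + 2))

lemma adjCoeff_succ_mul_adjCoeff {t u : Fin (m + 1)} (h : t ≤ u) :
    adjCoeff K L b u.succ * adjCoeff K L (mergeAdj b u.succ) t =
      -(adjCoeff K L b t.castSucc * adjCoeff K L (mergeAdj b t.castSucc) u) := by
  unfold adjCoeff
  rcases h.lt_or_eq with h | rfl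
  · rw [block_mergeAdj_of_lt b (by simpa using h.le), block_mergeAdj_of_lt b (by simpa using h),
      block_mergeAdj_of_gt b (by simpa using h), block_mergeAdj_of_gt b (by simpa using h.le)]
    simp only [Fin.val_succ, Fin.val_castSucc, Fin.succ_castSucc, pow_succ]
    ring
  · rw [block_mergeAdj_of_lt b (by simp), block_mergeAdj_self, block_mergeAdj_self,
      block_mergeAdj_of_gt b (by simp)]
    simp only [Fin.val_succ, Fin.val_castSucc, Fin.succ_castSucc, pow_succ]
    linear_combination (-1 : MvPolynomial (Fin n) K) ^ (2 * (t : ℕ)) *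
      xArrow_mul_xArrow_union K L
        (block_disjoint b (s := t.castSucc.castSucc) (t := t.succ.castSucc)
          (by simp [Fin.ext_iff]))
        (block_disjoint b (s := t.succ.castSucc) (t := t.succ.succ) (by simp [Fin.ext_iff]))

lemma adjCoeff_succ_mul_cycCoeff (t : Fin (m + 1)) :
    adjCoeff K L b t.succ * cycCoeff K L (mergeAdj b t.succ) =
      -(cycCoeff K L b * adjCoeff K L (mergeCyc b) t) := by
  unfold adjCoeff cycCoeff
  rw [block_mergeAdj_of_lt b (Fin.succ_pos t)]
  rcases Fin.eq_castSucc_or_eq_last t with ⟨t, rfl⟩ | rfl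
  · rw [Fin.succ_castSucc, block_mergeAdj_of_gt b (Fin.castSucc_lt_last t.succ),
      block_mergeCyc_castSucc, block_mergeCyc_castSucc]
    simp only [Fin.val_succ, Fin.val_castSucc, Fin.succ_last, Nat.succ_eq_add_one,
      Fin.castSucc_zero, Fin.succ_castSucc, pow_succ]
    ring
  · rw [Fin.succ_last, block_mergeAdj_self, block_mergeCyc_last, block_mergeCyc_castSucc]
    simp only [Fin.succ_last, Nat.succ_eq_add_one, Fin.castSucc_zero, Fin.val_last, pow_succ]
    linear_combination (-1 : MvPolynomial (Fin n) K) ^ (m + 1) *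
      xArrow_mul_xArrow_union K L
        (block_disjoint b (s := (Fin.last (m + 1)).castSucc) (t := Fin.last (m + 2))
          (by simp [Fin.ext_iff]))
        (block_disjoint b (s := Fin.last (m + 2)) (t := 0) (by simp [Fin.ext_iff]))

lemma adjCoeff_zero_mul_cycCoeff :
    adjCoeff K L b 0 * cycCoeff K L (mergeAdj b 0) =
      cycCoeff K L b * cycCoeff K L (mergeCyc b) := by
  unfold adjCoeff cycCoeff
  rw [block_mergeAdj_of_gt b (u := Fin.last (m + 1)) Fin.last_pos, block_mergeAdj_self,
    block_mergeCyc_last, ← Fin.castSucc_zero, block_mergeCyc_castSucc]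
  simp only [Fin.val_zero, Fin.succ_zero_eq_one, Fin.castSucc_zero, Fin.castSucc_one,
    Fin.succ_last, pow_zero, one_mul]
  exact (xArrow_mul_xArrow_union K L
    (block_disjoint b (s := Fin.last (m + 2)) (t := 0) (by simp [Fin.ext_iff]))
    (block_disjoint b (s := 0) (t := 1) (by simp))).symm

end Coefficients

section Differential

variable (K : Type*) [Field K] {n : ℕ} (L : Matrix (Fin n) (Fin n) ℤ)

lemma cycDiff_single {k : ℕ} (b : CycB n (k + 1)) (p : MvPolynomial (Fin n) K) :
    cycDiff K L k (Finsupp.single b p) = p • diffSingle K L b := by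
  simp [cycDiff]

variable {m : ℕ} (b : CycB n (m + 2))

lemma single_mergeAdj_mergeAdj_add {t u : Fin (m + 1)} (h : t ≤ u) :
    Finsupp.single (mergeAdj (mergeAdj b u.succ) t)
        (adjCoeff K L b u.succ * adjCoeff K L (mergeAdj b u.succ) t) +
      Finsupp.single (mergeAdj (mergeAdj b t.castSucc) u)
        (adjCoeff K L b t.castSucc * adjCoeff K L (mergeAdj b t.castSucc) u) = 0 := by
  rw [mergeAdj_mergeAdj_of_le b h, ← Finsupp.single_add, adjCoeff_succ_mul_adjCoeff K L b h,
    neg_add_cancel, Finsupp.single_zero]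

lemma sum_single_mergeAdj_mergeAdj :
    ∑ s, ∑ t, Finsupp.single (mergeAdj (mergeAdj b s) t)
        (adjCoeff K L b s * adjCoeff K L (mergeAdj b s) t) = 0 := by
  rw [← sum_product']
  refine sum_ninvolution mergeOrderSwap (fun p => ?_) (fun p _ => mergeOrderSwap_ne p)
    (fun _ => mem_univ _) mergeOrderSwap_involutive
  obtain ⟨t, u, h, rfl | rfl⟩ := exists_le_eq_succ_or_eq_castSucc p
  · rw [mergeOrderSwap_succ h]
    exact single_mergeAdj_mergeAdj_add K L b h
  · rw [mergeOrderSwap_castSucc h, add_comm]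
    exact single_mergeAdj_mergeAdj_add K L b h

lemma sum_single_mergeCyc_mergeAdj :
    ∑ s, Finsupp.single (mergeCyc (mergeAdj b s))
        (adjCoeff K L b s * cycCoeff K L (mergeAdj b s)) =
      Finsupp.single (mergeCyc (mergeCyc b)) (cycCoeff K L b * cycCoeff K L (mergeCyc b)) -
        ∑ t, Finsupp.single (mergeAdj (mergeCyc b) t)
          (cycCoeff K L b * adjCoeff K L (mergeCyc b) t) := by
  simp only [Fin.sum_univ_succ, mergeCyc_mergeAdj_zero, adjCoeff_zero_mul_cycCoeff,
    mergeCyc_mergeAdj_succ, adjCoeff_succ_mul_cycCoeff, Finsupp.single_neg, sum_neg_distrib,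
    sub_eq_add_neg]

lemma cycDiff_diffSingle : cycDiff K L m (diffSingle K L b) = 0 := by
  simp only [diffSingle_eq, map_sub, map_sum, cycDiff_single, smul_sub, smul_sum,
    Finsupp.smul_single, smul_eq_mul, sum_sub_distrib, sum_single_mergeAdj_mergeAdj,
    sum_single_mergeCyc_mergeAdj]
  abel

end Differential

/-- `cycDiff K L j` is `∂_{j+1}`, so `k = j + 2` in the informal statement. -/
theorem cyc_is_chain_complex_general (n : ℕ)
    (L : Matrix (Fin n) (Fin n) ℤ)
    (K : Type*) [Field K] :
    ∀ j : ℕ, j + 2 ≤ n - 1 →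
      (cycDiff K (n := n) L j).comp (cycDiff K L (j + 1)) = 0 := by
  intro j _
  refine Finsupp.lhom_ext fun b p => ?_
  rw [LinearMap.comp_apply, cycDiff_single, map_smul, cycDiff_diffSingle, smul_zero,
    LinearMap.zero_apply]

/-- For a CB matrix `L` and a field `K`, the Cyc sequence is a chain
complex of free `K[x]`-modules: `∂_{k-1} ∘ ∂_k = 0` for every `k` with
`2 ≤ k ≤ n - 1`.  (Here `cycDiff K L j` is the differential `∂_{j+1}`, so with
`k = j + 2` the condition reads as below.) -/
theorem cyc_is_chain_complex (n : ℕ) (hn : 3 ≤ n)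
    (L : Matrix (Fin n) (Fin n) ℤ) (hL : IsCB n L)
    (K : Type*) [Field K] :
    ∀ j : ℕ, j + 2 ≤ n - 1 →
      (cycDiff K (n := n) L j).comp (cycDiff K L (j + 1)) = 0 :=
  cyc_is_chain_complex_general n L K
end

section
/- Every n×n ICB matrix L can be reduced by a simultaneous permutation of its rows and columns to δ-block echelon form for some δ with 1 ≤ δ ≤ n−1; that is, there exist a permutation matrix P and a positive integer δ such that PᵀLP is in δ-block echelon form. -/
open Finset

/-- `L` is in `δ`-block echelon form: there is a partition of `{1,…,n-1}` into `δ`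
consecutive nonempty intervals `I₁,…,I_δ` with `I_{δ+1} = {n}` (encoded by the monotone
surjection `β` sending each index to its block, with only the last vertex in the last
block) such that `L_{I_i,I_j} = 0` whenever `j + 2 ≤ i`, and every column of
`L_{I_{j+1},I_j}` is nonzero. -/
def IsBlockEchelon (n δ : ℕ) (L : Matrix (Fin n) (Fin n) ℤ) : Prop :=
  ∃ β : Fin n → Fin (δ + 1), Monotone β ∧ Function.Surjective β ∧
    (∀ a : Fin n, β a = Fin.last δ ↔ (a : ℕ) = n - 1) ∧
    (∀ a b : Fin n, (β b : ℕ) + 2 ≤ (β a : ℕ) → L a b = 0) ∧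
    (∀ b : Fin n, β b ≠ Fin.last δ →
      ∃ a : Fin n, (β a : ℕ) = (β b : ℕ) + 1 ∧ L a b ≠ 0)

/-- Reachability to `v` in at most `k` steps along the relation `r`. -/
def MyReach {n : ℕ} (r : Fin n → Fin n → Prop) (v : Fin n) : ℕ → Fin n → Prop
  | 0, b => b = v
  | k + 1, b => MyReach r v k b ∨ ∃ a, r b a ∧ MyReach r v k a

/-- Every ICB matrix can be brought into `δ`-block echelon form, for some
`1 ≤ δ ≤ n - 1`, by a simultaneous permutation `σ` of its rows and columns
(`L.submatrix σ σ = PᵀLP` for the corresponding permutation matrix `P`). -/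
theorem exists_blockEchelon_permutation (n : ℕ) (hn : 3 ≤ n)
    (L : Matrix (Fin n) (Fin n) ℤ) (hL : IsICB n L) :
    ∃ δ : ℕ, 1 ≤ δ ∧ δ ≤ n - 1 ∧
      ∃ σ : Equiv.Perm (Fin n), IsBlockEchelon n δ (L.submatrix σ σ) := by
  classical
  obtain ⟨-, hirr⟩ := hL
  set v : Fin n := ⟨n - 1, by omega⟩ with hv
  set r : Fin n → Fin n → Prop := fun b a => L a b ≠ 0 ∧ a ≠ b with hrdef
  -- every vertex reaches v
  have hall : ∀ b, ∃ k, MyReach r v k b := by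
    by_contra h
    obtain ⟨b0, hb0⟩ := not_forall.mp h
    apply hirr
    refine ⟨{i | ∃ k, MyReach r v k i}, {i | ¬ ∃ k, MyReach r v k i},
      ⟨v, ⟨0, rfl⟩⟩, ⟨b0, hb0⟩, ?_, ?_, ?_⟩
    · rw [Set.disjoint_left]
      intro i hi hi'
      exact hi' hi
    · ext i
      simp only [Set.mem_union, Set.mem_setOf_eq, Set.mem_univ, iff_true]
      exact em _
    · intro i hi j hj
      by_contra hne
      apply hj
      rcases eq_or_ne i j with h | h
      · exact h ▸ hi
      · obtain ⟨k, hk⟩ := hi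
        exact ⟨k + 1, Or.inr ⟨i, ⟨hne, h⟩, hk⟩⟩
  set d : Fin n → ℕ := fun b => Nat.find (hall b) with hd
  have hdspec : ∀ b, MyReach r v (d b) b := fun b => Nat.find_spec (hall b)
  have hdmin : ∀ b k, MyReach r v k b → d b ≤ k := fun b k h => Nat.find_min' (hall b) h
  have hd0 : ∀ b, d b = 0 ↔ b = v := by
    intro b
    constructor
    · intro h
      have := hdspec b
      rw [h] at this
      exact this
    · intro h
      have : MyReach r v 0 b := h
      exact Nat.le_zero.mp (hdmin b 0 this)
  have hstep : ∀ b a, r b a → d b ≤ d a + 1 :=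
    fun b a hba => hdmin b _ (Or.inr ⟨a, hba, hdspec a⟩)
  have hdesc : ∀ b, b ≠ v → ∃ a, r b a ∧ d a + 1 = d b := by
    intro b hb
    have h1 : d b ≠ 0 := fun h => hb ((hd0 b).1 h)
    obtain ⟨m, hm⟩ : ∃ m, d b = m + 1 := ⟨d b - 1, by omega⟩
    have hsp := hdspec b
    rw [hm] at hsp
    rcases hsp with h | ⟨a, hra, hma⟩
    · have := hdmin b m h
      omega
    · refine ⟨a, hra, ?_⟩
      have h2 := hdmin a m hma
      have h3 := hstep b a hra
      omega
  obtain ⟨m, -, hmax⟩ := Finset.exists_max_image Finset.univ d ⟨v, Finset.mem_univ v⟩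
  set δ := d m with hδ
  have hdle : ∀ b, d b ≤ δ := fun b => hmax b (Finset.mem_univ b)
  -- every value in [0, δ] is attained by d
  have hsurjd : ∀ j ≤ δ, ∃ b, d b = j := by
    have key : ∀ k, ∀ b, d b = k → ∀ j, j ≤ k → ∃ a, d a = j := by
      intro k
      induction k with
      | zero => intro b hb j hj; exact ⟨b, by omega⟩
      | succ k ih =>
        intro b hb j hj
        rcases eq_or_lt_of_le hj with h | h
        · exact ⟨b, by omega⟩
        · have hbv : b ≠ v := by
            intro h'
            rw [(hd0 b).2 h'] at hb
            omega
          obtain ⟨a, -, ha⟩ := hdesc b hbv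
          exact ih a (by omega) j (by omega)
    intro j hj
    exact key δ m rfl j hj
  have hδ1 : 1 ≤ δ := by
    obtain ⟨u, hu⟩ := Fintype.exists_ne_of_one_lt_card
      (by rw [Fintype.card_fin]; omega) v
    have h1 := hdle u
    have h0 : d u ≠ 0 := fun h => hu ((hd0 u).1 h)
    omega
  have hδn : δ ≤ n - 1 := by
    have hsub : Finset.range (δ + 1) ⊆ Finset.image d Finset.univ := by
      intro j hj
      rw [Finset.mem_range] at hj
      obtain ⟨b, hb⟩ := hsurjd j (by omega)
      exact Finset.mem_image.mpr ⟨b, Finset.mem_univ b, hb⟩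
    have h1 := Finset.card_le_card hsub
    have h2 := Finset.card_image_le (s := (Finset.univ : Finset (Fin n))) (f := d)
    rw [Finset.card_range] at h1
    rw [Finset.card_univ, Fintype.card_fin] at h2
    omega
  set key : Fin n → ℕ := fun b => δ - d b with hkey
  set σ := Tuple.sort key with hσ
  have hmono : Monotone (key ∘ σ) := Tuple.monotone_sort key
  set β : Fin n → Fin (δ + 1) := fun a => ⟨key (σ a), Nat.lt_succ_of_le (Nat.sub_le _ _)⟩
    with hβ
  have hkval : ∀ b, key b = δ - d b := fun _ => rfl
  have hβval : ∀ a, (β a : ℕ) = key (σ a) := fun _ => rfl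
  -- characterization of the last block
  have hlast : ∀ a : Fin n, β a = Fin.last δ ↔ σ a = v := by
    intro a
    rw [Fin.ext_iff]
    simp only [hβval, hkval, Fin.val_last]
    constructor
    · intro h
      have h1 := hdle (σ a)
      have : d (σ a) = 0 := by omega
      exact (hd0 _).1 this
    · intro h
      have : d (σ a) = 0 := (hd0 _).2 h
      omega
  refine ⟨δ, hδ1, hδn, σ, β, ?_, ?_, ?_, ?_, ?_⟩
  · intro a b hab
    exact hmono hab
  · intro c
    obtain ⟨b, hb⟩ := hsurjd (δ - (c : ℕ)) (Nat.sub_le _ _)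
    refine ⟨σ.symm b, ?_⟩
    have hc : (c : ℕ) ≤ δ := Nat.lt_succ_iff.mp c.isLt
    apply Fin.ext
    simp only [hβval, hkval, Equiv.apply_symm_apply, hb]
    omega
  · -- last block is exactly index n - 1
    intro a
    rw [hlast a]
    obtain ⟨a₀, ha₀v⟩ : ∃ a₀, σ a₀ = v := ⟨σ.symm v, σ.apply_symm_apply v⟩
    have hmaxidx : ∀ b : Fin n, a₀ ≤ b → b = a₀ := by
      intro b hb
      have h1 : key (σ a₀) ≤ key (σ b) := hmono hb
      have h2 : key (σ a₀) = δ := by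
        rw [hkval, ha₀v, (hd0 v).2 rfl]
        omega
      have h3 : key (σ b) ≤ δ := Nat.sub_le _ _
      have h4 : key (σ b) = δ := by omega
      have h5 : d (σ b) = 0 := by
        have := hdle (σ b)
        rw [hkval] at h4
        omega
      have h6 : σ b = v := (hd0 _).1 h5
      have : σ b = σ a₀ := by rw [h6, ha₀v]
      exact σ.injective this
    have ha₀n : (a₀ : ℕ) = n - 1 := by
      have hle : a₀ ≤ (⟨n - 1, by omega⟩ : Fin n) := by
        rw [Fin.le_def]
        show (a₀ : ℕ) ≤ n - 1
        have := a₀.isLt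
        omega
      have h := hmaxidx ⟨n - 1, by omega⟩ hle
      rw [← h]
    constructor
    · intro h
      have : a = a₀ := σ.injective (h.trans ha₀v.symm)
      rw [this]; exact ha₀n
    · intro h
      have : a = a₀ := Fin.ext (by rw [h, ha₀n])
      rw [this, ha₀v]
  · -- zero blocks
    intro a b h
    simp only [hβval, hkval] at h
    have hxa := hdle (σ a)
    have hxb := hdle (σ b)
    have hkey2 : d (σ a) + 2 ≤ d (σ b) := by omega
    by_contra hne
    rcases eq_or_ne (σ a) (σ b) with he | he
    · rw [he] at hkey2; omega
    · have : r (σ b) (σ a) := ⟨hne, he⟩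
      have := hstep _ _ this
      omega
  · -- next-block nonzero column
    intro b hb
    have hbv : σ b ≠ v := by
      intro h
      exact hb ((hlast b).2 h)
    obtain ⟨a', hra', ha'⟩ := hdesc (σ b) hbv
    refine ⟨σ.symm a', ?_, ?_⟩
    · have h1 := hdle (σ b)
      have h2 : d (σ b) ≠ 0 := fun h => hbv ((hd0 _).1 h)
      simp only [hβval, hkval, Equiv.apply_symm_apply]
      omega
    · simp only [Matrix.submatrix_apply, Equiv.apply_symm_apply]
      exact hra'.1
end

section
/- Let L be an n×n ICB matrix in δ-block echelon form. Then for every nonempty subset C ⊆ {1,…,n−1}, the rightmost nonzero coordinate of the vector Lχ_C is negative; that is, there exists an index j with (Lχ_C)_j < 0 and (Lχ_C)_k = 0 for all k > j. -/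
open Finset

/-- If `L` is an ICB matrix in `δ`-block echelon form, then for every
nonempty `C ⊆ {1,…,n-1}` the rightmost nonzero coordinate of `L·χ_C` is negative. -/
theorem rightmost_nonzero_coord_neg (n : ℕ) (hn : 3 ≤ n)
    (L : Matrix (Fin n) (Fin n) ℤ) (hL : IsICB n L)
    (δ : ℕ) (hech : IsBlockEchelon n δ L) :
    ∀ C : Finset (Fin n), C.Nonempty → (⟨n - 1, by omega⟩ : Fin n) ∉ C →
      ∃ j : Fin n, L.mulVec (chi C) j < 0 ∧
        ∀ k : Fin n, j < k → L.mulVec (chi C) k = 0 := by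
  obtain ⟨β, hmono, hsurj, hlast, hzero, hcol⟩ := hech
  obtain ⟨⟨_, hoff, _, _⟩, _⟩ := hL
  intro C hCne hCnl
  set v : Fin n → ℤ := L.mulVec (chi C) with hv
  have hveq : ∀ k, v k = ∑ j ∈ C, L k j := by
    intro k
    simp [hv, Matrix.mulVec, dotProduct, chi, mul_ite, mul_one, mul_zero,
      Finset.sum_ite_mem, Finset.univ_inter]
  -- max block of C
  have hCimg : (C.image β).Nonempty := hCne.image β
  set m : Fin (δ + 1) := (C.image β).max' hCimg with hm
  have hmem : ∀ c ∈ C, β c ≤ m := fun c hc =>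
    Finset.le_max' _ _ (Finset.mem_image_of_mem β hc)
  obtain ⟨b, hbC, hbm⟩ : ∃ b ∈ C, β b = m := by
    obtain ⟨b, hbC, hbm⟩ := Finset.mem_image.mp ((C.image β).max'_mem hCimg)
    exact ⟨b, hbC, hbm⟩
  have hmne : m ≠ Fin.last δ := by
    intro h
    apply hCnl
    have : (b : ℕ) = n - 1 := (hlast b).mp (hbm.trans h)
    have : b = (⟨n - 1, by omega⟩ : Fin n) := Fin.ext this
    rwa [← this]
  have hble : β b ≠ Fin.last δ := by rw [hbm]; exact hmne
  obtain ⟨a, haβ, haL⟩ := hcol b hble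
  rw [hbm] at haβ
  -- a ∉ C
  have haC : a ∉ C := by
    intro h
    have := Fin.le_def.mp (hmem a h)
    omega
  -- every coordinate with block ≥ m+2 vanishes
  have hF1 : ∀ k, (m : ℕ) + 2 ≤ (β k : ℕ) → v k = 0 := by
    intro k hk
    rw [hveq]
    apply Finset.sum_eq_zero
    intro j hj
    exact hzero k j (by have := Fin.le_def.mp (hmem j hj); omega)
  -- every coordinate outside C is ≤ 0
  have hF2 : ∀ k, k ∉ C → v k ≤ 0 := by
    intro k hk
    rw [hveq]
    apply Finset.sum_nonpos
    intro j hj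
    exact hoff k j (fun h => hk (h ▸ hj))
  -- v a < 0
  have hLab : L a b < 0 := by
    have hne : a ≠ b := by
      intro h; rw [h, hbm] at haβ; omega
    exact lt_of_le_of_ne (hoff a b hne) haL
  have hva : v a < 0 := by
    rw [hveq]
    calc ∑ j ∈ C, L a j < ∑ _j ∈ C, (0 : ℤ) := by
          apply Finset.sum_lt_sum
          · intro j hj
            exact hoff a j (by intro h; exact haC (h ▸ hj))
          · exact ⟨b, hbC, hLab⟩
      _ = 0 := Finset.sum_const_zero
  -- rightmost nonzero coordinate
  have hSne : (Finset.univ.filter fun k => v k ≠ 0).Nonempty :=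
    ⟨a, by simp [hva.ne]⟩
  set j : Fin n := (Finset.univ.filter fun k => v k ≠ 0).max' hSne with hj
  have hjmem := (Finset.univ.filter fun k => v k ≠ 0).max'_mem hSne
  have hjne : v j ≠ 0 := (Finset.mem_filter.mp hjmem).2
  have haj : a ≤ j := Finset.le_max' _ _ (by simp [hva.ne])
  have hβj : (m : ℕ) + 1 ≤ (β j : ℕ) := haβ ▸ (hmono haj)
  have hβj2 : (β j : ℕ) ≤ (m : ℕ) + 1 := by
    by_contra h
    exact hjne (hF1 j (by omega))
  have hjC : j ∉ C := by
    intro h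
    have := Fin.le_def.mp (hmem j h)
    omega
  refine ⟨j, lt_of_le_of_ne (hF2 j hjC) hjne, ?_⟩
  intro k hk
  by_contra h
  have : k ≤ j := Finset.le_max' _ _ (by simp [h])
  exact absurd hk (not_lt.mpr this)
end

section
/- Let L be an n×n ICB matrix. For vertices i, k ∈ {1,…,n} with i ≠ k, let d(i,k) be the minimal length m of a directed path i = i₀, i₁, …, i_m = k with a_{i_t, i_{t+1}} > 0 for all t (such paths exist since L is irreducible). Let I₁,…,I_δ be consecutive intervals partitioning {1,…,n−1} and I_{δ+1} = {n}. Then L is in δ-block echelon form with respect to this partition if and only if for every i ∈ {1,…,δ}, I_i = {k ∈ {1,…,n−1} : d(n,k) = δ+1−i}. -/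
open Finset

/-- There is a directed path of length `m` from `i` to `k` in the digraph of `L`
(arcs `u → v` whenever `a_{u,v} > 0`, i.e. `L u v < 0`). -/
def HasPath {n : ℕ} (L : Matrix (Fin n) (Fin n) ℤ) (i k : Fin n) (m : ℕ) : Prop :=
  ∃ p : Fin (m + 1) → Fin n, p 0 = i ∧ p (Fin.last m) = k ∧
    ∀ t : Fin m, L (p t.castSucc) (p t.succ) < 0

lemma hasPath_zero {n : ℕ} (L : Matrix (Fin n) (Fin n) ℤ) (i k : Fin n) :
    HasPath L i k 0 ↔ i = k := by
  constructor
  · rintro ⟨p, h0, hl, -⟩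
    rw [← h0, ← hl]
    rfl
  · rintro rfl
    exact ⟨fun _ => i, rfl, rfl, fun t => t.elim0⟩

lemma hasPath_snoc {n m : ℕ} (L : Matrix (Fin n) (Fin n) ℤ) (i a b : Fin n)
    (h : HasPath L i a m) (hab : L a b < 0) : HasPath L i b (m + 1) := by
  obtain ⟨p, h0, hl, hs⟩ := h
  have key : ∀ s : Fin (m+1), Fin.snoc (α := fun _ => Fin n) p b s.castSucc = p s :=
    fun s => @Fin.snoc_castSucc _ (fun _ => Fin n) b p s
  refine ⟨Fin.snoc p b, ?_, ?_, ?_⟩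
  · have := key 0
    rw [Fin.castSucc_zero] at this
    rw [this, h0]
  · exact @Fin.snoc_last _ (fun _ => Fin n) b p
  · intro t
    refine Fin.lastCases ?_ ?_ t
    · rw [Fin.succ_last, key (Fin.last m), hl, @Fin.snoc_last _ (fun _ => Fin n) b p]
      exact hab
    · intro s
      rw [Fin.succ_castSucc, key s.castSucc, key s.succ]
      exact hs s

lemma hasPath_peel {n m : ℕ} (L : Matrix (Fin n) (Fin n) ℤ) (i k : Fin n)
    (h : HasPath L i k (m + 1)) : ∃ a, HasPath L i a m ∧ L a k < 0 := by
  obtain ⟨p, h0, hl, hs⟩ := h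
  refine ⟨p (Fin.last m).castSucc, ⟨fun t => p t.castSucc, ?_, rfl, ?_⟩, ?_⟩
  · show p (Fin.castSucc 0) = i
    rw [Fin.castSucc_zero, h0]
  · intro s
    have := hs s.castSucc
    rwa [Fin.succ_castSucc] at this
  · have := hs (Fin.last m)
    rwa [Fin.succ_last, hl] at this

/-- Under the first echelon condition, any path of length `m` from a vertex in the
top block reaches only vertices `k` with `δ ≤ β k + m`. -/
lemma path_lower_bound {n δ : ℕ} (L : Matrix (Fin n) (Fin n) ℤ)
    (β : Fin n → Fin (δ + 1))
    (hE1 : ∀ a b : Fin n, (β b : ℕ) + 2 ≤ (β a : ℕ) → L a b = 0)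
    (N : Fin n) (hN : (β N : ℕ) = δ) :
    ∀ m, ∀ k : Fin n, HasPath L N k m → δ ≤ (β k : ℕ) + m := by
  intro m
  induction m with
  | zero =>
    intro k h
    rw [← (hasPath_zero L N k).mp h]
    omega
  | succ m ih =>
    intro k h
    obtain ⟨a, ha, hak⟩ := hasPath_peel L N k h
    have h1 := ih a ha
    have h2 : ¬ ((β k : ℕ) + 2 ≤ (β a : ℕ)) := fun hc => absurd (hE1 a k hc) hak.ne
    omega

/-- Under the second echelon condition, every vertex `k` with `β k + m = δ` is
reachable from `N` by a path of length `m`. -/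
lemma path_exists {n δ : ℕ} (L : Matrix (Fin n) (Fin n) ℤ)
    (hoff : ∀ a b : Fin n, a ≠ b → L a b ≤ 0)
    (β : Fin n → Fin (δ + 1))
    (hE2 : ∀ b : Fin n, (β b : ℕ) ≠ δ → ∃ a : Fin n, (β a : ℕ) = (β b : ℕ) + 1 ∧ L a b ≠ 0)
    (N : Fin n) (huniq : ∀ a : Fin n, (β a : ℕ) = δ → a = N) :
    ∀ m, ∀ k : Fin n, (β k : ℕ) + m = δ → HasPath L N k m := by
  intro m
  induction m with
  | zero =>
    intro k hk
    rw [hasPath_zero]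
    exact (huniq k (by omega)).symm
  | succ m ih =>
    intro k hk
    obtain ⟨a, ha, hak⟩ := hE2 k (by omega)
    have hne : a ≠ k := fun h => by rw [h] at ha; omega
    exact hasPath_snoc L N a k (ih a (by omega)) (lt_of_le_of_ne (hoff a k hne) hak)

/-- Let `L` be an ICB matrix and let `β` encode a partition of
`{1,…,n-1}` into `δ` consecutive intervals `I₁,…,I_δ` together with
`I_{δ+1} = {n}`.  Then `L` is in `δ`-block echelon form with respect to this
partition iff for every `i ∈ {1,…,δ}`,
`I_i = {k ∈ {1,…,n-1} : d(n,k) = δ + 1 - i}`, where `d` is the unweighted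
directed distance. -/
theorem blockEchelon_iff_dist_partition (n : ℕ) (hn : 3 ≤ n)
    (L : Matrix (Fin n) (Fin n) ℤ) (hL : IsICB n L)
    (δ : ℕ) (hδ : 1 ≤ δ)
    (β : Fin n → Fin (δ + 1)) (hmono : Monotone β) (hsurj : Function.Surjective β)
    (hlast : ∀ a : Fin n, β a = Fin.last δ ↔ (a : ℕ) = n - 1) :
    ((∀ a b : Fin n, (β b : ℕ) + 2 ≤ (β a : ℕ) → L a b = 0) ∧
     (∀ b : Fin n, β b ≠ Fin.last δ →
        ∃ a : Fin n, (β a : ℕ) = (β b : ℕ) + 1 ∧ L a b ≠ 0)) ↔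
    (∀ i : Fin δ, ∀ k : Fin n,
      β k = i.castSucc ↔
        ((k : ℕ) ≠ n - 1 ∧
          HasPath L (⟨n - 1, by omega⟩ : Fin n) k (δ - (i : ℕ)) ∧
          ∀ m < δ - (i : ℕ), ¬ HasPath L (⟨n - 1, by omega⟩ : Fin n) k m)) := by
  set N : Fin n := ⟨n - 1, by omega⟩ with hNdef
  have hoff : ∀ a b : Fin n, a ≠ b → L a b ≤ 0 := hL.1.2.1
  have hβle : ∀ a : Fin n, (β a : ℕ) ≤ δ := fun a => Nat.lt_succ_iff.mp (β a).isLt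
  have hNval : (N : ℕ) = n - 1 := rfl
  have hNβ : (β N : ℕ) = δ := by
    have := (hlast N).mpr hNval
    rw [this]; rfl
  have huniq : ∀ a : Fin n, (β a : ℕ) = δ → a = N := by
    intro a ha
    have : β a = Fin.last δ := Fin.ext (by simpa using ha)
    exact Fin.ext ((hlast a).mp this)
  have hE2' : ∀ (hE2 : ∀ b : Fin n, β b ≠ Fin.last δ →
      ∃ a : Fin n, (β a : ℕ) = (β b : ℕ) + 1 ∧ L a b ≠ 0),
      ∀ b : Fin n, (β b : ℕ) ≠ δ → ∃ a : Fin n, (β a : ℕ) = (β b : ℕ) + 1 ∧ L a b ≠ 0 := by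
    intro hE2 b hb
    exact hE2 b (fun h => hb (by rw [h]; rfl))
  constructor
  · rintro ⟨hE1, hE2⟩ i k
    have hpe := path_exists L hoff β (hE2' hE2) N huniq
    have hplb := path_lower_bound L β hE1 N hNβ
    constructor
    · intro hk
      have hik : (β k : ℕ) = (i : ℕ) := by rw [hk]; simp
      have hkne : (k : ℕ) ≠ n - 1 := by
        intro h
        have := (hlast k).mpr h
        rw [this] at hik
        simp at hik
        omega
      refine ⟨hkne, hpe (δ - (i : ℕ)) k (by omega), ?_⟩
      intro m hm hpath
      have := hplb m k hpath
      omega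
    · rintro ⟨hk1, hk2, hk3⟩
      have h1 := hplb (δ - (i : ℕ)) k hk2
      have hlt : (β k : ℕ) < δ := by
        rcases lt_or_eq_of_le (hβle k) with h | h
        · exact h
        · exact absurd (congrArg Fin.val (huniq k h)) (by simpa using hk1)
      have hge : (i : ℕ) ≤ (β k : ℕ) := by omega
      have hpath' := hpe (δ - (β k : ℕ)) k (by omega)
      have : (β k : ℕ) = (i : ℕ) := by
        by_contra hne
        exact hk3 (δ - (β k : ℕ)) (by omega) hpath'
      exact Fin.ext (by simpa using this)
  · intro hD
    have hDf : ∀ k : Fin n, (β k : ℕ) < δ →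
        ((k : ℕ) ≠ n - 1 ∧ HasPath L N k (δ - (β k : ℕ)) ∧
          ∀ m < δ - (β k : ℕ), ¬ HasPath L N k m) := by
      intro k hk
      exact (hD ⟨(β k : ℕ), hk⟩ k).mp (Fin.ext (by simp))
    constructor
    · intro a b hab
      by_contra hLab
      have hne : a ≠ b := fun h => by rw [h] at hab; omega
      have harc : L a b < 0 := lt_of_le_of_ne (hoff a b hne) hLab
      have hbδ : (β b : ℕ) < δ := by have := hβle a; omega
      obtain ⟨-, hpb, hminb⟩ := hDf b hbδ
      rcases lt_or_eq_of_le (hβle a) with haδ | haδ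
      · obtain ⟨-, hpa, -⟩ := hDf a haδ
        have := hasPath_snoc L N a b hpa harc
        exact hminb (δ - (β a : ℕ) + 1) (by omega) this
      · have : a = N := huniq a haδ
        subst this
        have h0 : HasPath L N N 0 := (hasPath_zero L N N).mpr rfl
        have := hasPath_snoc L N N b h0 harc
        exact hminb 1 (by omega) this
    · intro b hb
      have hbδ : (β b : ℕ) < δ := by
        rcases lt_or_eq_of_le (hβle b) with h | h
        · exact h
        · exact absurd (Fin.ext (by simpa using h) : β b = Fin.last δ) hb
      obtain ⟨-, hpb, hminb⟩ := hDf b hbδ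
      obtain ⟨m, hm⟩ : ∃ m, δ - (β b : ℕ) = m + 1 := ⟨δ - (β b : ℕ) - 1, by omega⟩
      rw [hm] at hpb
      obtain ⟨a, hpa, harc⟩ := hasPath_peel L N b hpb
      have haβ : (β a : ℕ) = (β b : ℕ) + 1 := by
        rcases Nat.eq_zero_or_pos m with hm0 | hm0
        · subst hm0
          have : a = N := ((hasPath_zero L N a).mp hpa).symm
          rw [this, hNβ]
          omega
        · have haN : a ≠ N := by
            intro h
            subst h
            have h1 := hasPath_snoc L N N b ((hasPath_zero L N N).mpr rfl) harc
            exact hminb 1 (by omega) h1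
          have hj : (β b : ℕ) + 1 < δ := by omega
          have := (hD ⟨(β b : ℕ) + 1, hj⟩ a).mpr ⟨?_, ?_, ?_⟩
          · rw [this]; simp
          · intro h
            exact haN (Fin.ext h)
          · have : δ - ((β b : ℕ) + 1) = m := by omega
            rw [show ((⟨(β b : ℕ) + 1, hj⟩ : Fin δ) : ℕ) = (β b : ℕ) + 1 from rfl, this]
            exact hpa
          · intro m' hm' hpath
            have hval : ((⟨(β b : ℕ) + 1, hj⟩ : Fin δ) : ℕ) = (β b : ℕ) + 1 := rfl
            rw [hval] at hm'
            have := hasPath_snoc L N a b hpath harc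
            exact hminb (m' + 1) (by omega) this
      exact ⟨a, haβ, harc.ne⟩
end
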